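/- arXiv:1611.03808 — 7 statements merged into one kernel-verified Lean document; each statement's English description precedes it below -/
import Mathlib

section
/- Let (X,M,μ) be a measure space with a ball-basis B. If a ball B ∈ B and balls G_k ∈ B satisfy G_k ∩ B ≠ ∅ and μ(G_k) → sup_{A∈B} μ(A), then X ⊂ ∪_k G_k^{[1]}; moreover, for every ball A ∈ B there exists k_0 such that A ⊂ G_k^{[1]} for all k ≥ k_0. -/
open MeasureTheory Set ENNReal

/-- A ball-basis on a measure space: conditions B1)-B4) of Karagulyan. -/
structure BallBasis {X : Type*} [MeasurableSpace X] (μ : Measure X)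
    (𝓑 : Set (Set X)) (hull : Set X → Set X) (K : ℝ≥0∞) : Prop where
  K_pos : 0 < K
  meas : ∀ B ∈ 𝓑, MeasurableSet B
  /-- B1) balls have positive finite measure -/
  pos : ∀ B ∈ 𝓑, 0 < μ B ∧ μ B < ⊤
  /-- B2) any two points lie in a common ball -/
  two : ∀ x y : X, ∃ B ∈ 𝓑, x ∈ B ∧ y ∈ B
  /-- B3) approximation of measurable sets by countable unions of balls -/
  approx : ∀ E : Set X, MeasurableSet E → ∀ ε : ℝ≥0∞, 0 < ε →
    ∃ 𝒞 ⊆ 𝓑, 𝒞.Countable ∧ μ ((E \ ⋃₀ 𝒞) ∪ (⋃₀ 𝒞 \ E)) < ε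
  /-- B4) every ball has a hull -/
  hull_mem : ∀ B ∈ 𝓑, hull B ∈ 𝓑
  hull_sub : ∀ B ∈ 𝓑, ∀ A ∈ 𝓑, μ A ≤ 2 * μ B → (A ∩ B).Nonempty → A ⊆ hull B
  hull_bound : ∀ B ∈ 𝓑, μ (hull B) ≤ K * μ B

/-!
Any ball `A` and the fixed ball `B` lie in a common ball `E` (join them through a ball containing
a point of each, using B2 and twice B4). Since `μ E / 2 < μ E ≤ sup μ`, eventually
`μ E ≤ 2 μ (G k)`; as `E ⊇ B` meets `G k`, B4 gives `A ⊆ E ⊆ hull (G k)`. Every point lies in some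
ball by B2, so the hulls cover `X`.
-/

namespace BallBasis

variable {X : Type*} [MeasurableSpace X] {μ : Measure X} {𝓑 : Set (Set X)}
  {hull : Set X → Set X} {K : ℝ≥0∞}

theorem nonempty (h : BallBasis μ 𝓑 hull K) {B : Set X} (hB : B ∈ 𝓑) : B.Nonempty :=
  nonempty_of_measure_ne_zero (h.pos B hB).1.ne'

theorem subset_hull (h : BallBasis μ 𝓑 hull K) {B : Set X} (hB : B ∈ 𝓑) : B ⊆ hull B :=
  h.hull_sub B hB B hB (le_mul_of_one_le_left zero_le one_le_two) (by simpa using h.nonempty hB)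

theorem exists_superset_of_inter_nonempty (h : BallBasis μ 𝓑 hull K) {P Q : Set X}
    (hP : P ∈ 𝓑) (hQ : Q ∈ 𝓑) (hPQ : (P ∩ Q).Nonempty) : ∃ E ∈ 𝓑, P ⊆ E ∧ Q ⊆ E := by
  have two_mul_ge {a : ℝ≥0∞} {b : ℝ≥0∞} (hab : a ≤ b) : a ≤ 2 * b :=
    hab.trans (le_mul_of_one_le_left zero_le one_le_two)
  rcases le_total (μ P) (μ Q) with hle | hle
  · exact ⟨hull Q, h.hull_mem Q hQ, h.hull_sub Q hQ P hP (two_mul_ge hle) hPQ, h.subset_hull hQ⟩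
  · exact ⟨hull P, h.hull_mem P hP, h.subset_hull hP,
      h.hull_sub P hP Q hQ (two_mul_ge hle) (by rwa [inter_comm] at hPQ)⟩

theorem exists_superset_pair (h : BallBasis μ 𝓑 hull K) {A B : Set X} (hA : A ∈ 𝓑)
    (hB : B ∈ 𝓑) : ∃ E ∈ 𝓑, A ⊆ E ∧ B ⊆ E := by
  obtain ⟨a, ha⟩ := h.nonempty hA
  obtain ⟨b, hb⟩ := h.nonempty hB
  obtain ⟨D, hD, haD, hbD⟩ := h.two a b
  obtain ⟨E₁, hE₁, hAE₁, hDE₁⟩ := h.exists_superset_of_inter_nonempty hA hD ⟨a, ha, haD⟩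
  obtain ⟨E, hE, hE₁E, hBE⟩ := h.exists_superset_of_inter_nonempty hE₁ hB ⟨b, hDE₁ hbD, hb⟩
  exact ⟨E, hE, hAE₁.trans hE₁E, hBE⟩

theorem eventually_le_two_mul_of_tendsto_iSup (h : BallBasis μ 𝓑 hull K) {G : ℕ → Set X}
    (hlim : Filter.Tendsto (fun k => μ (G k)) Filter.atTop (nhds (⨆ A ∈ 𝓑, μ A)))
    {E : Set X} (hE : E ∈ 𝓑) : ∀ᶠ k in Filter.atTop, μ E ≤ 2 * μ (G k) := by
  have half_lt : μ E / 2 < ⨆ A ∈ 𝓑, μ A :=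
    (ENNReal.half_lt_self (h.pos E hE).1.ne' (h.pos E hE).2.ne).trans_le (le_biSup _ hE)
  filter_upwards [hlim.eventually (eventually_gt_nhds half_lt)] with k hk
  calc μ E = 2 * (μ E / 2) := (ENNReal.mul_div_cancel' (by norm_num) (by norm_num)).symm
    _ ≤ 2 * μ (G k) := by gcongr

end BallBasis

/-- Lemma 3.2: if balls G_k meet a fixed ball B and
μ(G_k) → sup_{A∈𝓑} μ(A), then the hulls of the G_k cover X; moreover any
ball A is eventually contained in every hull G_k^{[1]}. -/
theorem hulls_eventually_cover
    {X : Type*} [MeasurableSpace X] (μ : Measure X)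
    (𝓑 : Set (Set X)) (hull : Set X → Set X) (K : ℝ≥0∞)
    (hbasis : BallBasis μ 𝓑 hull K)
    (B : Set X) (hB : B ∈ 𝓑) (G : ℕ → Set X) (hG : ∀ k, G k ∈ 𝓑)
    (hmeet : ∀ k, (G k ∩ B).Nonempty)
    (hlim : Filter.Tendsto (fun k => μ (G k)) Filter.atTop
      (nhds (⨆ A ∈ 𝓑, μ A))) :
    (Set.univ : Set X) ⊆ (⋃ k, hull (G k)) ∧
      ∀ A ∈ 𝓑, ∃ k₀ : ℕ, ∀ k ≥ k₀, A ⊆ hull (G k) := by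
  have eventually_subset : ∀ A ∈ 𝓑, ∃ k₀ : ℕ, ∀ k ≥ k₀, A ⊆ hull (G k) := by
    intro A hA
    obtain ⟨E, hE, hAE, hBE⟩ := hbasis.exists_superset_pair hA hB
    obtain ⟨k₀, hk₀⟩ :=
      Filter.eventually_atTop.mp (hbasis.eventually_le_two_mul_of_tendsto_iSup hlim hE)
    refine ⟨k₀, fun k hk => hAE.trans (hbasis.hull_sub (G k) (hG k) E hE (hk₀ k hk) ?_)⟩
    obtain ⟨x, hxG, hxB⟩ := hmeet k
    exact ⟨x, hBE hxB, hxG⟩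
  refine ⟨fun x _ => ?_, eventually_subset⟩
  obtain ⟨A, hA, hxA, -⟩ := hbasis.two x x
  obtain ⟨k₀, hk₀⟩ := eventually_subset A hA
  exact mem_iUnion.mpr ⟨k₀, hk₀ k₀ le_rfl hxA⟩
end

section
/- Let (X,M,μ) be a measure space with a ball-basis B (hull constant K). For every bounded measurable set E there exists a sequence of balls B_k such that E ⊂ ∪_k B_k almost surely and Σ_k μ(B_k) ≤ 2K·μ(E). -/
open MeasureTheory Set ENNReal

/-!
By B3) approximate `E` by a countable union of balls, up to a set of small measure. Vitali's
selection with enlargement factor `2` extracts a disjoint subfamily whose hulls, by B4), cover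
all these balls at total cost `K` times the measure of their union, hence about `K μ(E)`.
What remains of `E` has small measure; repeating the construction on the remainders with
tolerances `εₙ` of total sum at most `μ(E) / 2` exhausts `E` up to a null set at total cost
`K (μ(E) + 2 ∑ εₙ) ≤ 2 K μ(E)`.
-/

section Exhaustion

variable {X : Type*} [MeasurableSpace X] {μ : Measure X} {𝓑 : Set (Set X)}

theorem exists_cover_measure_diff_eq_zero_of_forall_lt (h𝓑 : ∀ B ∈ 𝓑, MeasurableSet B)
    {c : ℝ≥0∞} (hstep : ∀ F, MeasurableSet F → μ F ≠ ⊤ → ∀ ε, 0 < ε → ε ≠ ⊤ →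
      ∃ 𝒟 ⊆ 𝓑, 𝒟.Countable ∧ μ (F \ ⋃₀ 𝒟) < ε ∧ ∑' D : 𝒟, μ D ≤ c * (μ F + ε))
    {E : Set X} (hE : MeasurableSet E) (hEfin : μ E ≠ ⊤) {δ : ℝ≥0∞} (hδ : δ ≠ 0) :
    ∃ 𝒞 ⊆ 𝓑, 𝒞.Countable ∧ μ (E \ ⋃₀ 𝒞) = 0 ∧ ∑' C : 𝒞, μ C ≤ c * (μ E + δ) := by
  obtain ⟨ε, hε, hεsum⟩ := exists_pos_sum_of_countable' (ENNReal.half_pos hδ).ne' ℕ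
  have hεfin : ∑' n, ε n ≠ ⊤ := (hεsum.trans_le le_top).ne
  -- The empty family off the measurable subsets of `E` keeps the recursion below non-dependent.
  have hstep' : ∀ (n : ℕ) (F : Set X), ∃ 𝒟 ⊆ 𝓑, 𝒟.Countable ∧ (MeasurableSet F → F ⊆ E →
      μ (F \ ⋃₀ 𝒟) < ε n ∧ ∑' D : 𝒟, μ D ≤ c * (μ F + ε n)) := by
    intro n F
    by_cases hF : MeasurableSet F ∧ F ⊆ E
    · obtain ⟨𝒟, h𝒟, h𝒟c, hdiff, hsum⟩ := hstep F hF.1 (measure_ne_top_of_subset hF.2 hEfin)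
        (ε n) (hε n) (ENNReal.lt_top_of_tsum_ne_top hεfin n).ne
      exact ⟨𝒟, h𝒟, h𝒟c, fun _ _ => ⟨hdiff, hsum⟩⟩
    · exact ⟨∅, empty_subset _, countable_empty, fun h h' => absurd ⟨h, h'⟩ hF⟩
  choose 𝒟 h𝒟 h𝒟c h𝒟spec using hstep'
  let R : ℕ → Set X := fun n => Nat.rec E (fun n F => F \ ⋃₀ 𝒟 n F) n
  have hR_succ : ∀ n, R (n + 1) = R n \ ⋃₀ 𝒟 n (R n) := fun n => rfl
  have hR : ∀ n, MeasurableSet (R n) ∧ R n ⊆ E := by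
    intro n
    induction n with
    | zero => exact ⟨hE, subset_rfl⟩
    | succ n ih =>
      rw [hR_succ]
      exact ⟨ih.1.diff (.sUnion (h𝒟c n _) fun B hB => h𝓑 B (h𝒟 n _ hB)), sdiff_subset.trans ih.2⟩
  have hdiff n := (h𝒟spec n (R n) (hR n).1 (hR n).2).1
  have hsum n := (h𝒟spec n (R n) (hR n).1 (hR n).2).2
  refine ⟨⋃ n, 𝒟 n (R n), iUnion_subset fun n => h𝒟 n _, countable_iUnion fun n => h𝒟c n _,
    ?_, ?_⟩
  · have hsub : ∀ n, E \ ⋃₀ ⋃ n, 𝒟 n (R n) ⊆ R n := by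
      intro n
      induction n with
      | zero => exact sdiff_subset
      | succ n ih =>
        rw [hR_succ, sUnion_iUnion]
        exact fun x hx => ⟨ih (by rwa [sUnion_iUnion]), fun hxn => hx.2 (mem_iUnion.2 ⟨n, hxn⟩)⟩
    refine le_zero_iff.1 (ge_of_tendsto' (tendsto_atTop_zero_of_tsum_ne_top hεfin) fun n => ?_)
    exact (measure_mono (hsub (n + 1))).trans (hR_succ n ▸ (hdiff n).le)
  · have hR_sum : ∑' n, μ (R n) ≤ μ E + ∑' n, ε n := by
      rw [tsum_eq_zero_add' ENNReal.summable]
      exact add_le_add le_rfl (ENNReal.tsum_le_tsum fun n => (hR_succ n ▸ hdiff n).le)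
    calc ∑' C : ⋃ n, 𝒟 n (R n), μ C
        ≤ ∑' n, ∑' D : 𝒟 n (R n), μ D := ENNReal.tsum_iUnion_le_tsum _ _
      _ ≤ ∑' n, c * (μ (R n) + ε n) := ENNReal.tsum_le_tsum hsum
      _ = c * (∑' n, μ (R n) + ∑' n, ε n) := by rw [ENNReal.tsum_mul_left, ENNReal.tsum_add]
      _ ≤ c * (μ E + ∑' n, ε n + ∑' n, ε n) := by grw [hR_sum]
      _ ≤ c * (μ E + δ) := by
        rw [add_assoc, ← ENNReal.add_halves δ]
        gcongr

end Exhaustion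

namespace BallBasis

variable {X : Type*} [MeasurableSpace X] {μ : Measure X} {𝓑 : Set (Set X)}
  {hull : Set X → Set X} {K : ℝ≥0∞}

theorem exists_pairwise_disjoint_sUnion_subset_hull (hb : BallBasis μ 𝓑 hull K)
    {𝒞 : Set (Set X)} (h𝒞 : 𝒞 ⊆ 𝓑) (hfin : μ (⋃₀ 𝒞) ≠ ⊤) :
    ∃ u ⊆ 𝒞, u.Pairwise Disjoint ∧ ⋃₀ 𝒞 ⊆ ⋃₀ (hull '' u) := by
  have hAfin : ∀ A ∈ 𝒞, μ A ≠ ⊤ := fun A hA =>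
    measure_ne_top_of_subset (subset_sUnion_of_mem hA) hfin
  obtain ⟨u, hu𝒞, hdisj, hcov⟩ :=
    Vitali.exists_disjoint_subfamily_covering_enlargement id 𝒞 (fun A => (μ A).toReal) 2
      one_lt_two (fun _ _ => toReal_nonneg) (μ (⋃₀ 𝒞)).toReal
      (fun A hA => toReal_mono hfin (measure_mono (subset_sUnion_of_mem hA)))
      (fun A hA => nonempty_of_measure_ne_zero (hb.pos A (h𝒞 hA)).1.ne')
  refine ⟨u, hu𝒞, hdisj, sUnion_subset fun A hA => ?_⟩
  obtain ⟨B, hBu, hAB, hle⟩ := hcov A hA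
  have hle' : μ A ≤ 2 * μ B := by
    rwa [← toReal_le_toReal (hAfin A hA) (mul_ne_top ofNat_ne_top (hAfin B (hu𝒞 hBu))),
      toReal_mul, toReal_ofNat]
  exact (hb.hull_sub B (h𝒞 (hu𝒞 hBu)) A (h𝒞 hA) hle' hAB).trans
    (subset_sUnion_of_mem (mem_image_of_mem hull hBu))

theorem tsum_measure_hull_image_le (hb : BallBasis μ 𝓑 hull K) {u : Set (Set X)}
    (hu𝓑 : u ⊆ 𝓑) (huc : u.Countable) (hdisj : u.Pairwise Disjoint) :
    ∑' D : hull '' u, μ D ≤ K * μ (⋃₀ u) :=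
  calc ∑' D : hull '' u, μ D
      ≤ ∑' A : u, μ (hull A) :=
        ENNReal.tsum_le_tsum_comp_of_surjective imageFactorization_surjective _
    _ ≤ ∑' A : u, K * μ A := ENNReal.tsum_le_tsum fun A => hb.hull_bound A (hu𝓑 A.2)
    _ = K * μ (⋃₀ u) := by
      rw [ENNReal.tsum_mul_left, measure_sUnion huc hdisj fun A hA => hb.meas A (hu𝓑 hA)]

theorem exists_cover_measure_diff_lt (hb : BallBasis μ 𝓑 hull K) {F : Set X}
    (hF : MeasurableSet F) (hFfin : μ F ≠ ⊤) {ε : ℝ≥0∞} (hε : 0 < ε) (hεfin : ε ≠ ⊤) :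
    ∃ 𝒟 ⊆ 𝓑, 𝒟.Countable ∧ μ (F \ ⋃₀ 𝒟) < ε ∧ ∑' D : 𝒟, μ D ≤ K * (μ F + ε) := by
  obtain ⟨𝒞, h𝒞, h𝒞c, hsymm⟩ := hb.approx F hF ε hε
  have h𝒞F : μ (⋃₀ 𝒞) ≤ μ F + ε :=
    calc μ (⋃₀ 𝒞) ≤ μ (⋃₀ 𝒞 ∩ F) + μ (⋃₀ 𝒞 \ F) := measure_le_inter_add_sdiff μ _ _
      _ ≤ μ F + ε :=
        add_le_add (measure_mono inter_subset_right)
          ((measure_mono subset_union_right).trans hsymm.le)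
  obtain ⟨u, hu𝒞, hdisj, hcover⟩ := hb.exists_pairwise_disjoint_sUnion_subset_hull h𝒞
    (ne_top_of_le_ne_top (add_ne_top.2 ⟨hFfin, hεfin⟩) h𝒞F)
  refine ⟨hull '' u, image_subset_iff.2 fun A hA => hb.hull_mem A (h𝒞 (hu𝒞 hA)),
    (h𝒞c.mono hu𝒞).image hull, ?_, ?_⟩
  · exact (measure_mono (sdiff_subset_sdiff_right hcover)).trans_lt
      ((measure_mono subset_union_left).trans_lt hsymm)
  · calc ∑' D : hull '' u, μ D
        ≤ K * μ (⋃₀ u) := hb.tsum_measure_hull_image_le (hu𝒞.trans h𝒞) (h𝒞c.mono hu𝒞) hdisj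
      _ ≤ K * (μ F + ε) := by grw [sUnion_mono hu𝒞, h𝒞F]

end BallBasis

/-- Lemma 3.6: in a measure space with a ball-basis, every
bounded measurable set is almost surely covered by a countable family of
balls whose total measure is at most 2K times the measure of the set. -/
theorem cover_with_controlled_total_measure
    {X : Type*} [MeasurableSpace X] (μ : Measure X)
    (𝓑 : Set (Set X)) (hull : Set X → Set X) (K : ℝ≥0∞)
    (hbasis : BallBasis μ 𝓑 hull K)
    (E : Set X) (hEmeas : MeasurableSet E) (hbd : ∃ B ∈ 𝓑, E ⊆ B) :
    ∃ 𝒞 ⊆ 𝓑, 𝒞.Countable ∧ μ (E \ ⋃₀ 𝒞) = 0 ∧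
      (∑' B : 𝒞, μ (B : Set X)) ≤ 2 * K * μ E := by
  obtain ⟨B₀, hB₀, hEB₀⟩ := hbd
  by_cases hE0 : μ E = 0
  · exact ⟨∅, empty_subset _, countable_empty, measure_mono_null sdiff_subset hE0, by simp⟩
  obtain ⟨𝒞, h𝒞, h𝒞c, hnull, hsum⟩ :=
    exists_cover_measure_diff_eq_zero_of_forall_lt hbasis.meas
      (fun F hF hFfin ε hε hεfin => hbasis.exists_cover_measure_diff_lt hF hFfin hε hεfin)
      hEmeas (measure_ne_top_of_subset hEB₀ (hbasis.pos B₀ hB₀).2.ne) hE0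
  exact ⟨𝒞, h𝒞, h𝒞c, hnull, hsum.trans_eq (by ring)⟩
end

section
/- Let (X,M,μ) be a measure space with a ball-basis B with hull constant K, and 1 ≤ r < ∞. The maximal operator M_r f(x) = sup_{B ∈ B, x ∈ B} (μ(B)^{-1} ∫_B |f|^r dμ)^{1/r} satisfies the weak-type bound: for every f ∈ L^r(X) and λ > 0, μ^*({x : M_r f(x) > λ}) ≤ K · λ^{-r} ∫_X |f|^r dμ, where μ^* is outer measure. -/
open MeasureTheory Set ENNReal

/-- The maximal operator `M_r` associated with a ball-basis. -/
noncomputable def maxOp {X : Type*} [MeasurableSpace X] (μ : Measure X)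
    (𝓑 : Set (Set X)) (r : ℝ) (f : X → ℝ) (x : X) : ℝ≥0∞ :=
  ⨆ B ∈ 𝓑, ⨆ (_ : x ∈ B),
    ((∫⁻ y in B, ENNReal.ofReal |f y| ^ r ∂μ) / μ B) ^ (1 / r)

/-
Every point of `{M_r f > λ}` lies in a ball `B` with `λ^r μ(B) < ∫_B |f|^r`. Such
balls have measure at most `λ^{-r} ∫ |f|^r`, so the Vitali selection (with enlargement factor 2)
yields a disjoint subfamily whose hulls cover all of them. Disjoint balls of positive
`|f|^r dμ`-mass form a countable family, and summing `μ(B^*) ≤ K μ(B) < K λ^{-r} ∫_B |f|^r` over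
it gives the bound.
-/

theorem Set.PairwiseDisjoint.countable_of_measure_pos {X : Type*} [MeasurableSpace X]
    {ν : Measure X} [SFinite ν] {u : Set (Set X)} (hu : u.PairwiseDisjoint id)
    (hmeas : ∀ b ∈ u, MeasurableSet b) (hpos : ∀ b ∈ u, 0 < ν b) : u.Countable := by
  have hcount := Measure.countable_meas_pos_of_disjoint_iUnion (μ := ν)
    (As := fun b : u => (b : Set X)) (fun b => hmeas b b.2)
    (fun i j hij => hu i.2 j.2 (Subtype.coe_injective.ne hij))
  exact countable_coe_iff.mp <| countable_univ_iff.mp <| hcount.mono fun b _ => hpos b b.2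

namespace BallBasis

variable {X : Type*} [MeasurableSpace X] {μ : Measure X} {𝓑 : Set (Set X)}
  {hull : Set X → Set X} {K : ℝ≥0∞}

theorem exists_pairwiseDisjoint_subset_biUnion_hull (hB : BallBasis μ 𝓑 hull K)
    {t : Set (Set X)} (ht : t ⊆ 𝓑) {C : ℝ≥0∞} (hC : C ≠ ∞) (hle : ∀ a ∈ t, μ a ≤ C) :
    ∃ u ⊆ t, u.PairwiseDisjoint id ∧ ⋃₀ t ⊆ ⋃ b ∈ u, hull b := by
  obtain ⟨u, hut, hdisj, hcov⟩ := Vitali.exists_disjoint_subfamily_covering_enlargement id t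
    (fun a => (μ a).toReal) 2 one_lt_two (fun _ _ => toReal_nonneg) C.toReal
    (fun a ha => toReal_mono hC (hle a ha))
    (fun a ha => nonempty_of_measure_ne_zero (hB.pos a (ht ha)).1.ne')
  refine ⟨u, hut, hdisj, sUnion_subset fun a ha => ?_⟩
  obtain ⟨b, hbu, hab, hsize⟩ := hcov a ha
  have hb : b ∈ 𝓑 := ht (hut hbu)
  have hdouble : μ a ≤ 2 * μ b := by
    rw [← toReal_le_toReal (hB.pos a (ht ha)).2.ne (mul_ne_top ofNat_ne_top (hB.pos b hb).2.ne),
      toReal_mul]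
    simpa using hsize
  exact (hB.hull_sub b hb a (ht ha) hdouble hab).trans (subset_biUnion_of_mem (u := hull) hbu)

theorem measure_biUnion_hull_le (hB : BallBasis μ 𝓑 hull K) {u : Set (Set X)} (hu : u ⊆ 𝓑)
    (hcount : u.Countable) : μ (⋃ b ∈ u, hull b) ≤ K * ∑' b : u, μ b :=
  calc μ (⋃ b ∈ u, hull b)
      ≤ ∑' b : u, μ (hull b) := measure_biUnion_le μ hcount _
    _ ≤ ∑' b : u, K * μ b := ENNReal.tsum_le_tsum fun b => hB.hull_bound b (hu b.2)
    _ = K * ∑' b : u, μ b := ENNReal.tsum_mul_left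

theorem measure_sUnion_setOf_lt_le (hB : BallBasis μ 𝓑 hull K) (ν : Measure X)
    [IsFiniteMeasure ν] {c : ℝ≥0∞} (hc0 : c ≠ 0) (hc : c ≠ ∞) :
    μ (⋃₀ {B ∈ 𝓑 | c * μ B < ν B}) ≤ K / c * ν univ := by
  set t := {B ∈ 𝓑 | c * μ B < ν B}
  have hsmall : ∀ B ∈ t, μ B ≤ ν B / c := fun B hBt =>
    (ENNReal.le_div_iff_mul_le (.inl hc0) (.inl hc)).2 (by rw [mul_comm]; exact hBt.2.le)
  obtain ⟨u, hut, hdisj, hcover⟩ := hB.exists_pairwiseDisjoint_subset_biUnion_hull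
    (fun B hBt => hBt.1) (div_ne_top (measure_ne_top ν univ) hc0)
    (fun B hBt => (hsmall B hBt).trans (by gcongr; exact subset_univ B))
  have hmeas : ∀ b ∈ u, MeasurableSet b := fun b hb => hB.meas b (hut hb).1
  have hcount : u.Countable :=
    hdisj.countable_of_measure_pos hmeas fun b hb => pos_of_gt (hut hb).2
  calc μ (⋃₀ t)
      ≤ μ (⋃ b ∈ u, hull b) := measure_mono hcover
    _ ≤ K * ∑' b : u, μ b := hB.measure_biUnion_hull_le (fun b hb => (hut hb).1) hcount
    _ ≤ K * ∑' b : u, ν b / c := by gcongr with b; exact hsmall b (hut b.2)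
    _ = K / c * ν (⋃₀ u) := by
        rw [measure_sUnion hcount hdisj hmeas]
        simp only [div_eq_mul_inv, ENNReal.tsum_mul_right]
        ring
    _ ≤ K / c * ν univ := by gcongr; exact subset_univ _

theorem setOf_lt_maxOp_subset (hB : BallBasis μ 𝓑 hull K) {r : ℝ} (hr : 0 < r) (f : X → ℝ)
    (l : ℝ≥0∞) :
    {x | l < maxOp μ 𝓑 r f x} ⊆
      ⋃₀ {B ∈ 𝓑 | l ^ r * μ B < μ.withDensity (fun y => ENNReal.ofReal |f y| ^ r) B} := by
  intro x hx
  simp only [mem_ofPred_eq, maxOp, lt_iSup_iff] at hx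
  obtain ⟨B, hB𝓑, hxB, hlt⟩ := hx
  refine ⟨B, ⟨hB𝓑, ?_⟩, hxB⟩
  have hpow := ENNReal.rpow_lt_rpow hlt hr
  rw [← ENNReal.rpow_mul, one_div, inv_mul_cancel₀ hr.ne', ENNReal.rpow_one,
    ← withDensity_apply _ (hB.meas B hB𝓑)] at hpow
  exact (ENNReal.lt_div_iff_mul_lt (.inl (hB.pos B hB𝓑).1.ne') (.inl (hB.pos B hB𝓑).2.ne)).mp hpow

end BallBasis

theorem maximal_weak_type_general
    {X : Type*} [MeasurableSpace X] (μ : Measure X)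
    (𝓑 : Set (Set X)) (hull : Set X → Set X) (K : ℝ≥0∞)
    (hbasis : BallBasis μ 𝓑 hull K)
    (r : ℝ) (hr : 1 ≤ r)
    (f : X → ℝ)
    (l : ℝ≥0∞) (hl : 0 < l) :
    μ {x | l < maxOp μ 𝓑 r f x} ≤
      K / l ^ r * ∫⁻ x, ENNReal.ofReal |f x| ^ r ∂μ := by
  rcases eq_or_ne l ∞ with rfl | hl_top
  · simp
  have hlr0 : l ^ r ≠ 0 := (ENNReal.rpow_pos hl hl_top).ne'
  have hlr_top : l ^ r ≠ ∞ := ENNReal.rpow_ne_top_of_ne_zero hl.ne' hl_top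
  set ν := μ.withDensity fun y => ENNReal.ofReal |f y| ^ r
  rcases eq_or_ne (∫⁻ x, ENNReal.ofReal |f x| ^ r ∂μ) ∞ with hI | hI
  · rw [hI, mul_top (ENNReal.div_pos hbasis.K_pos.ne' hlr_top).ne']
    exact le_top
  have : IsFiniteMeasure ν := isFiniteMeasure_withDensity hI
  calc μ {x | l < maxOp μ 𝓑 r f x}
      ≤ μ (⋃₀ {B ∈ 𝓑 | l ^ r * μ B < ν B}) :=
        measure_mono (hbasis.setOf_lt_maxOp_subset (zero_lt_one.trans_le hr) f l)
    _ ≤ K / l ^ r * ν univ := hbasis.measure_sUnion_setOf_lt_le ν hlr0 hlr_top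
    _ = K / l ^ r * ∫⁻ x, ENNReal.ofReal |f x| ^ r ∂μ := by
        rw [withDensity_apply _ MeasurableSet.univ, Measure.restrict_univ]

/-- Theorem 4.1: the maximal operator M_r associated with a
ball-basis satisfies the weak-L^r bound with constant K^{1/r}, i.e.
μ*({M_r f > λ}) ≤ K λ^{-r} ∫ |f|^r. -/
theorem maximal_weak_type
    {X : Type*} [MeasurableSpace X] (μ : Measure X)
    (𝓑 : Set (Set X)) (hull : Set X → Set X) (K : ℝ≥0∞)
    (hbasis : BallBasis μ 𝓑 hull K)
    (r : ℝ) (hr : 1 ≤ r)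
    (f : X → ℝ) (hf : MemLp f (ENNReal.ofReal r) μ)
    (l : ℝ≥0∞) (hl : 0 < l) :
    μ {x | l < maxOp μ 𝓑 r f x} ≤
      K / l ^ r * ∫⁻ x, ENNReal.ofReal |f x| ^ r ∂μ :=
  maximal_weak_type_general μ 𝓑 hull K hbasis r hr f l hl
end

section
/- Let (X,M,μ) be a measure space with a ball-basis B (hull constant K) and let w be an A_p weight, 1 < p < ∞. Then the maximal operator associated to the measure w, M_w f(x) = sup_{B∋x} w(B)^{-1} ∫_B |f| dw, satisfies the weak-type (1,1) bound with respect to w: ‖M_w‖_{L¹(w)→L^{1,∞}(w)} ≤ (2K)^p [w]_{A_p}. -/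
open MeasureTheory Set ENNReal

/-- The A_p characteristic of a weight w with respect to the family 𝓑. -/
noncomputable def apConst {X : Type*} [MeasurableSpace X] (μ : Measure X)
    (𝓑 : Set (Set X)) (p : ℝ) (w : X → ℝ≥0∞) : ℝ≥0∞ :=
  ⨆ B ∈ 𝓑, ((∫⁻ y in B, w y ∂μ) / μ B) *
    (((∫⁻ y in B, (w y) ^ (-(p - 1)⁻¹) ∂μ) / μ B) ^ (p - 1))

/-- The maximal operator associated with the measure w dμ. -/
noncomputable def maxOpW {X : Type*} [MeasurableSpace X] (ν : Measure X)
    (𝓑 : Set (Set X)) (f : X → ℝ≥0∞) (x : X) : ℝ≥0∞ :=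
  ⨆ B ∈ 𝓑, ⨆ (_ : x ∈ B), (∫⁻ y in B, f y ∂ν) / ν B

/-!
A_p makes `w dμ` doubling along hulls: for a ball `B` with hull `B*`, Hölder gives
`μ(B)^p ≤ w(B) σ(B)^(p-1)` with `σ = w^(-1/(p-1))`, while the A_p condition on `B*` gives
`w(B*) σ(B*)^(p-1) ≤ [w] μ(B*)^p`; as `σ(B) ≤ σ(B*)` and `μ(B*) ≤ K μ(B)`, this yields
`w(B*) ≤ K^p [w] w(B)`.
A Vitali selection (enlargement factor 2, at each bounded scale) extracts disjoint balls whose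
hulls cover the superlevel set of `M_w f`, and doubling turns this into the weak-type bound.
-/

theorem measure_univ_rpow_le_lintegral_mul_lintegral_rpow_neg {X : Type*} [MeasurableSpace X]
    (μ : Measure X) {p : ℝ} (hp : 1 < p) {w : X → ℝ≥0∞} (hw : Measurable w)
    (hW : ∫⁻ y, w y ∂μ ≠ ⊤) (hS : ∫⁻ y, w y ^ (-(p - 1)⁻¹) ∂μ ≠ ⊤) :
    μ univ ^ p ≤ (∫⁻ y, w y ∂μ) * (∫⁻ y, w y ^ (-(p - 1)⁻¹) ∂μ) ^ (p - 1) := by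
  have hp0 : 0 < p := by linarith
  have hp1 : 0 < p - 1 := by linarith
  set q := p.conjExponent
  have hpq : p.HolderConjugate q := .conjExponent hp
  have hq : 1 / q = (p - 1) / p := by
    simp only [q, Real.conjExponent]; field_simp
  have hw_top : ∀ᵐ y ∂μ, w y ≠ ⊤ := (ae_lt_top hw hW).mono fun _ => ne_of_lt
  have hw_zero : ∀ᵐ y ∂μ, w y ≠ 0 := (ae_lt_top (hw.pow_const _) hS).mono fun y hy h0 => by
    rw [h0, ENNReal.zero_rpow_of_neg (by simpa using hp1)] at hy
    exact hy.ne rfl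
  -- `w ^ (1/p) * (w ^ (-1/(p-1))) ^ ((p-1)/p) = w ^ (1/p - 1/p)`, which is `1` where `0 < w < ⊤`
  have hone : (fun _ => (1 : ℝ≥0∞)) =ᵐ[μ]
      (fun y => w y ^ (1 / p)) * fun y => (w y ^ (-(p - 1)⁻¹)) ^ (1 / q) := by
    filter_upwards [hw_top, hw_zero] with y htop hzero
    rw [Pi.mul_apply, ← ENNReal.rpow_mul, ← ENNReal.rpow_add _ _ hzero htop, hq]
    field_simp
    simp
  have holder := ENNReal.lintegral_mul_le_Lp_mul_Lq μ hpq (hw.pow_const (1 / p)).aemeasurable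
    ((hw.pow_const (-(p - 1)⁻¹)).pow_const (1 / q)).aemeasurable
  have hw_p : ∀ y, (w y ^ (1 / p)) ^ p = w y := fun y => by
    rw [← ENNReal.rpow_mul, one_div_mul_cancel hp0.ne', ENNReal.rpow_one]
  have hw_q : ∀ y, ((w y ^ (-(p - 1)⁻¹)) ^ (1 / q)) ^ q = w y ^ (-(p - 1)⁻¹) := fun y => by
    rw [← ENNReal.rpow_mul, one_div_mul_cancel hpq.symm.ne_zero, ENNReal.rpow_one]
  rw [← lintegral_congr_ae hone, lintegral_const, one_mul] at holder
  simp only [hw_p, hw_q] at holder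
  calc μ univ ^ p
      ≤ ((∫⁻ y, w y ∂μ) ^ (1 / p) * (∫⁻ y, w y ^ (-(p - 1)⁻¹) ∂μ) ^ (1 / q)) ^ p :=
        ENNReal.rpow_le_rpow holder hp0.le
    _ = (∫⁻ y, w y ∂μ) * (∫⁻ y, w y ^ (-(p - 1)⁻¹) ∂μ) ^ (p - 1) := by
      rw [ENNReal.mul_rpow_of_nonneg _ _ hp0.le, ← ENNReal.rpow_mul, ← ENNReal.rpow_mul,
        one_div_mul_cancel hp0.ne', ENNReal.rpow_one, hq, div_mul_cancel₀ _ hp0.ne']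

theorem lintegral_mul_lintegral_rpow_le_apConst_mul {X : Type*} [MeasurableSpace X]
    {μ : Measure X} {𝓑 : Set (Set X)} {p : ℝ} (hp : 1 ≤ p) (w : X → ℝ≥0∞) {B : Set X}
    (hB : B ∈ 𝓑) (hB0 : μ B ≠ 0) (hBtop : μ B ≠ ⊤) :
    (∫⁻ y in B, w y ∂μ) * (∫⁻ y in B, w y ^ (-(p - 1)⁻¹) ∂μ) ^ (p - 1) ≤
      apConst μ 𝓑 p w * μ B ^ p := by
  have hball : (∫⁻ y in B, w y ∂μ) / μ B * ((∫⁻ y in B, w y ^ (-(p - 1)⁻¹) ∂μ) / μ B) ^ (p - 1)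
      ≤ apConst μ 𝓑 p w :=
    le_biSup (fun B => (∫⁻ y in B, w y ∂μ) / μ B *
      ((∫⁻ y in B, w y ^ (-(p - 1)⁻¹) ∂μ) / μ B) ^ (p - 1)) hB
  have hpow : μ B * μ B ^ (p - 1) = μ B ^ p := by
    nth_rw 1 [← ENNReal.rpow_one (μ B)]
    rw [← ENNReal.rpow_add _ _ hB0 hBtop, add_sub_cancel]
  rwa [ENNReal.div_rpow_of_nonneg _ _ (by linarith),
    ← ENNReal.mul_div_mul_comm (Or.inl hB0) (Or.inl hBtop), hpow,
    ENNReal.div_le_iff (by positivity) (by finiteness)] at hball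

theorem tsum_setLIntegral_le_lintegral {X ι : Type*} [MeasurableSpace X] {ν : Measure X}
    {s : ι → Set X} (hs : ∀ i, MeasurableSet (s i)) (hd : Pairwise (Function.onFun Disjoint s))
    (f : X → ℝ≥0∞) : ∑' i, ∫⁻ x in s i, f x ∂ν ≤ ∫⁻ x, f x ∂ν :=
  calc ∑' i, ∫⁻ x in s i, f x ∂ν = ∑' i, ν.withDensity f (s i) := by
        simp only [withDensity_apply _ (hs _)]
    _ ≤ ν.withDensity f (⋃ i, s i) := tsum_meas_le_meas_iUnion_of_disjoint _ hs hd
    _ ≤ ν.withDensity f univ := measure_mono (subset_univ _)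
    _ = ∫⁻ x, f x ∂ν := by rw [withDensity_apply _ MeasurableSet.univ, Measure.restrict_univ]

theorem exists_mem_mul_lt_setLIntegral_of_lt_maxOpW {X : Type*} [MeasurableSpace X]
    {ν : Measure X} {𝓑 : Set (Set X)} {f : X → ℝ≥0∞} {l : ℝ≥0∞} {x : X}
    (hx : l < maxOpW ν 𝓑 f x) : ∃ B ∈ 𝓑, x ∈ B ∧ l * ν B < ∫⁻ y in B, f y ∂ν := by
  simp only [maxOpW, lt_iSup_iff] at hx
  obtain ⟨B, hB, hxB, hlB⟩ := hx
  exact ⟨B, hB, hxB, ENNReal.mul_lt_of_lt_div hlB⟩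

theorem measure_le_div_mul_setLIntegral_of_mul_lt {X : Type*} [MeasurableSpace X]
    {ν : Measure X} {A B : Set X} {f : X → ℝ≥0∞} {C l : ℝ≥0∞} (hl : l ≠ 0) (hl' : l ≠ ⊤)
    (hdoub : ν B ≠ ⊤ → ν A ≤ C * ν B) (hlB : l * ν B < ∫⁻ y in B, f y ∂ν) :
    ν A ≤ C / l * ∫⁻ y in B, f y ∂ν := by
  have hB : ν B ≠ ⊤ := fun h => by simp [h, ENNReal.mul_top hl] at hlB
  calc ν A ≤ C * ν B := hdoub hB
    _ ≤ C * ((∫⁻ y in B, f y ∂ν) / l) := by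
        gcongr
        rw [ENNReal.le_div_iff_mul_le (Or.inl hl) (Or.inl hl'), mul_comm]
        exact hlB.le
    _ = C / l * ∫⁻ y in B, f y ∂ν := by rw [div_eq_mul_inv, div_eq_mul_inv]; ring

namespace BallBasis

variable {X : Type*} [MeasurableSpace X] {μ : Measure X} {𝓑 : Set (Set X)}
  {hull : Set X → Set X} {K : ℝ≥0∞}

theorem withDensity_hull_le (h : BallBasis μ 𝓑 hull K) {p : ℝ} (hp : 1 < p)
    {w : X → ℝ≥0∞} (hw : Measurable w) (hAp : apConst μ 𝓑 p w ≠ ⊤) {B : Set X} (hB : B ∈ 𝓑)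
    (hwB : μ.withDensity w B ≠ ⊤) :
    μ.withDensity w (hull B) ≤ K ^ p * apConst μ 𝓑 p w * μ.withDensity w B := by
  have hB' := h.hull_mem B hB
  obtain ⟨hB0, hBtop⟩ := h.pos B hB
  obtain ⟨hB'0, hB'top⟩ := h.pos _ hB'
  rw [withDensity_apply _ (h.meas B hB)] at hwB ⊢
  rw [withDensity_apply _ (h.meas _ hB')]
  set A := apConst μ 𝓑 p w
  set W := ∫⁻ y in B, w y ∂μ
  set W' := ∫⁻ y in hull B, w y ∂μ
  set S' := ∫⁻ y in hull B, w y ^ (-(p - 1)⁻¹) ∂μ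
  rcases eq_or_ne W' 0 with hW'0 | hW'0
  · simp [hW'0]
  have hAp_hull : W' * S' ^ (p - 1) ≤ A * μ (hull B) ^ p :=
    lintegral_mul_lintegral_rpow_le_apConst_mul hp.le w hB' hB'0.ne' hB'top.ne
  have hS'_top : S' ≠ ⊤ := fun hS' => by
    rw [hS', ENNReal.top_rpow_of_pos (by linarith), ENNReal.mul_top hW'0, top_le_iff] at hAp_hull
    exact ENNReal.mul_ne_top hAp (by finiteness) hAp_hull
  have hS_le : ∫⁻ y in B, w y ^ (-(p - 1)⁻¹) ∂μ ≤ S' := lintegral_mono_set (h.subset_hull hB)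
  have hholder : μ B ^ p ≤ W * S' ^ (p - 1) := by
    refine (Measure.restrict_apply_univ B ▸ measure_univ_rpow_le_lintegral_mul_lintegral_rpow_neg
      (μ.restrict B) hp hw hwB (ne_top_of_le_ne_top hS'_top hS_le)).trans ?_
    gcongr
  have hhull : μ (hull B) ^ p ≤ K ^ p * μ B ^ p := by
    rw [← ENNReal.mul_rpow_of_nonneg _ _ (by linarith)]
    exact ENNReal.rpow_le_rpow (h.hull_bound B hB) (by linarith)
  refine (ENNReal.mul_le_mul_iff_left (c := μ B ^ p) (by positivity) (by finiteness)).1 ?_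
  calc W' * μ B ^ p ≤ W' * (W * S' ^ (p - 1)) := by gcongr
    _ = W * (W' * S' ^ (p - 1)) := by ring
    _ ≤ W * (A * μ (hull B) ^ p) := by gcongr
    _ ≤ W * (A * (K ^ p * μ B ^ p)) := by gcongr
    _ = K ^ p * A * W * μ B ^ p := by ring

theorem exists_pairwiseDisjoint_sUnion_subset_biUnion_hull (h : BallBasis μ 𝓑 hull K)
    {t : Set (Set X)} (ht : t ⊆ 𝓑) {R : ℝ≥0∞} (hR : R ≠ ⊤) (htR : ∀ B ∈ t, μ B ≤ R) :
    ∃ u ⊆ t, u.PairwiseDisjoint id ∧ ⋃₀ t ⊆ ⋃ b ∈ u, hull b := by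
  obtain ⟨u, hut, hdisj, hcov⟩ := Vitali.exists_disjoint_subfamily_covering_enlargement id t
    (fun B => (μ B).toReal) 2 one_lt_two (fun _ _ => toReal_nonneg) R.toReal
    (fun B hB => toReal_mono hR (htR B hB))
    (fun B hB => nonempty_of_measure_ne_zero (h.pos B (ht hB)).1.ne')
  refine ⟨u, hut, hdisj, fun x ⟨a, ha, hxa⟩ => ?_⟩
  obtain ⟨b, hb, hab, hμ⟩ := hcov a ha
  have hμ' : μ a ≤ 2 * μ b := by
    rwa [← ENNReal.toReal_le_toReal (h.pos a (ht ha)).2.ne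
      (ENNReal.mul_ne_top ofNat_ne_top (h.pos b (ht (hut hb))).2.ne), toReal_mul, toReal_ofNat]
  exact mem_biUnion hb (h.hull_sub b (ht (hut hb)) a (ht ha) hμ' hab hxa)

variable {ν : Measure X} {C l : ℝ≥0∞}

theorem measure_sUnion_le_of_doubling (h : BallBasis μ 𝓑 hull K)
    (hdoub : ∀ B ∈ 𝓑, ν B ≠ ⊤ → ν (hull B) ≤ C * ν B) {f : X → ℝ≥0∞} (hf : ∫⁻ x, f x ∂ν ≠ ⊤)
    (hl : l ≠ 0) (hl' : l ≠ ⊤) {t : Set (Set X)}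
    (ht : ∀ B ∈ t, B ∈ 𝓑 ∧ l * ν B < ∫⁻ x in B, f x ∂ν) {R : ℝ≥0∞} (hR : R ≠ ⊤)
    (htR : ∀ B ∈ t, μ B ≤ R) :
    ν (⋃₀ t) ≤ C / l * ∫⁻ x, f x ∂ν := by
  obtain ⟨u, hut, hdisj, hcov⟩ :=
    h.exists_pairwiseDisjoint_sUnion_subset_biUnion_hull (fun B hB => (ht B hB).1) hR htR
  have hsum : ∑' b : u, ∫⁻ x in b, f x ∂ν ≤ ∫⁻ x, f x ∂ν :=
    tsum_setLIntegral_le_lintegral (s := fun b : u => (b : Set X))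
      (fun b => h.meas _ (ht _ (hut b.2)).1)
      (fun b b' hbb' => hdisj b.2 b'.2 (Subtype.coe_injective.ne hbb')) f
  -- every selected ball carries positive mass of `f dν`, and the total is finite
  have hu : u.Countable := by
    have hsupp := Summable.countable_support_ennreal (ne_top_of_le_ne_top hf hsum)
    rw [Function.support_eq_univ fun b => ((ht _ (hut b.2)).2.trans_le' zero_le).ne'] at hsupp
    exact countable_coe_iff.1 (countable_univ_iff.1 hsupp)
  calc ν (⋃₀ t) ≤ ν (⋃ b ∈ u, hull b) := measure_mono hcov
    _ ≤ ∑' b : u, ν (hull b) := measure_biUnion_le ν hu _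
    _ ≤ ∑' b : u, C / l * ∫⁻ x in b, f x ∂ν := ENNReal.tsum_le_tsum fun b =>
        measure_le_div_mul_setLIntegral_of_mul_lt hl hl' (hdoub b (ht _ (hut b.2)).1)
          (ht _ (hut b.2)).2
    _ = C / l * ∑' b : u, ∫⁻ x in b, f x ∂ν := ENNReal.tsum_mul_left
    _ ≤ C / l * ∫⁻ x, f x ∂ν := by gcongr

theorem measure_lt_maxOpW_le_of_doubling (h : BallBasis μ 𝓑 hull K)
    (hdoub : ∀ B ∈ 𝓑, ν B ≠ ⊤ → ν (hull B) ≤ C * ν B) (f : X → ℝ≥0∞) (hl : l ≠ 0) :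
    ν {x | l < maxOpW ν 𝓑 f x} ≤ C / l * ∫⁻ x, f x ∂ν := by
  rcases eq_or_ne l ⊤ with rfl | hl'
  · simp
  by_cases hf : ∫⁻ x, f x ∂ν = ⊤
  · rcases eq_or_ne C 0 with rfl | hC
    -- doubling with constant `0` leaves no ball of finite positive `ν`-measure
    · suffices {x | l < maxOpW ν 𝓑 f x} = ∅ by simp [this]
      refine eq_empty_of_forall_notMem fun x hx => ?_
      obtain ⟨B, hB, -, hlB⟩ := exists_mem_mul_lt_setLIntegral_of_lt_maxOpW hx
      have hB0 : ν B = 0 := le_zero_iff.1 <| (measure_mono (h.subset_hull hB)).trans <|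
        (measure_le_div_mul_setLIntegral_of_mul_lt hl hl' (hdoub B hB) hlB).trans_eq (by simp)
      simp [setLIntegral_measure_zero _ _ hB0] at hlB
    · rw [hf, ENNReal.mul_top (ENNReal.div_ne_zero.2 ⟨hC, hl'⟩)]
      exact le_top
  let s (n : ℕ) : Set X := ⋃₀ {B | (B ∈ 𝓑 ∧ l * ν B < ∫⁻ x in B, f x ∂ν) ∧ μ B ≤ n}
  have hs : Monotone s := fun m n hmn =>
    sUnion_subset_sUnion fun B hB => ⟨hB.1, hB.2.trans (by exact_mod_cast hmn)⟩
  have hcover : {x | l < maxOpW ν 𝓑 f x} ⊆ ⋃ n, s n := fun x hx => by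
    obtain ⟨B, hB, hxB, hlB⟩ := exists_mem_mul_lt_setLIntegral_of_lt_maxOpW hx
    obtain ⟨n, hn⟩ := ENNReal.exists_nat_gt (h.pos B hB).2.ne
    exact mem_iUnion.2 ⟨n, B, ⟨⟨hB, hlB⟩, hn.le⟩, hxB⟩
  calc ν {x | l < maxOpW ν 𝓑 f x} ≤ ν (⋃ n, s n) := measure_mono hcover
    _ = ⨆ n, ν (s n) := hs.measure_iUnion
    _ ≤ C / l * ∫⁻ x, f x ∂ν := iSup_le fun n =>
        h.measure_sUnion_le_of_doubling hdoub hf hl hl' (fun B hB => hB.1) (natCast_ne_top n)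
          fun B hB => hB.2

end BallBasis

/-- Lemma 5.5, inequality (5.8): for an A_p weight w, the
maximal operator M_w associated to the measure w dμ is of weak type (1,1)
with respect to w, with constant (2K)^p [w]_{A_p}. -/
theorem weighted_maximal_weak_type
    {X : Type*} [MeasurableSpace X] (μ : Measure X)
    (𝓑 : Set (Set X)) (hull : Set X → Set X) (K : ℝ≥0∞)
    (hbasis : BallBasis μ 𝓑 hull K)
    (p : ℝ) (hp : 1 < p)
    (w : X → ℝ≥0∞) (hw : Measurable w)
    (hAp : apConst μ 𝓑 p w ≠ ⊤)
    (f : X → ℝ≥0∞) (l : ℝ≥0∞) (hl : 0 < l) :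
    μ.withDensity w {x | l < maxOpW (μ.withDensity w) 𝓑 f x} ≤
      (2 * K) ^ p * apConst μ 𝓑 p w / l *
        ∫⁻ x, f x ∂(μ.withDensity w) :=
  calc μ.withDensity w {x | l < maxOpW (μ.withDensity w) 𝓑 f x}
      ≤ K ^ p * apConst μ 𝓑 p w / l * ∫⁻ x, f x ∂(μ.withDensity w) :=
        hbasis.measure_lt_maxOpW_le_of_doubling
          (fun _ hB => hbasis.withDensity_hull_le hp hw hAp hB) f hl.ne'
    _ ≤ (2 * K) ^ p * apConst μ 𝓑 p w / l * ∫⁻ x, f x ∂(μ.withDensity w) := by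
        gcongr
        exact le_mul_of_one_le_left zero_le one_le_two
end

section
/- Let B be a family of measurable sets in (X,M,μ) satisfying the Besicovitch D-condition. Then the maximal operator M_μ f(x) = sup_{B∋x, B∈B} μ(B)^{-1}∫_B |f| dμ satisfies ‖M_μ‖_{L¹(μ)→L^{1,∞}(μ)} ≤ D and ‖M_μ‖_{L^p(μ)→L^p(μ)} ≤ c_p D^{1/p} for 1 < p < ∞. -/
/-!
Weak type: the sets of `𝓑` on which the average of `f` exceeds `t` cover `{t < M f}`. The
Besicovitch condition extracts a subfamily with the same union and overlap at most `D`, so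
`t μ {t < M f} ≤ ∑ t μ B ≤ ∑ ∫_B f ≤ D ∫ f`.

Strong type: since `M f ≤ M (f 1_{f > t}) + t`, the weak bound gives
`t μ {2t < M f} ≤ D ∫_{f > t} f`. Summing this over the dyadic levels `t = 2^k` with weights
`2^{k(p-1)}` is a discrete layer-cake argument. It is discrete because neither `f` nor `M f`
need be measurable, and for arbitrary functions only `∑ ∫ ≤ ∫ ∑` is available.
-/

open MeasureTheory Set ENNReal

/-- The maximal operator associated with a measure and a family of sets. -/
noncomputable def maxOpM {X : Type*} [MeasurableSpace X] (μ : Measure X)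
    (𝓑 : Set (Set X)) (f : X → ℝ≥0∞) (x : X) : ℝ≥0∞ :=
  ⨆ B ∈ 𝓑, ⨆ (_ : x ∈ B), (∫⁻ y in B, f y ∂μ) / μ B

/-- The Besicovitch D-condition: from any subfamily one can extract a
subcollection with the same union and overlap at most D. -/
def BesicovitchCond {X : Type*} (𝓑 : Set (Set X)) (D : ℕ) : Prop :=
  ∀ 𝒜 ⊆ 𝓑, ∃ 𝒜' ⊆ 𝒜, ⋃₀ 𝒜' = ⋃₀ 𝒜 ∧
    ∀ x : X, ({A ∈ 𝒜' | x ∈ A}).encard ≤ (D : ℕ∞)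

namespace MeasureTheory

variable {X : Type*} [MeasurableSpace X] {μ : Measure X}

theorem sum_lintegral_le_lintegral_sum {ι : Type*} (s : Finset ι) (g : ι → X → ℝ≥0∞) :
    ∑ i ∈ s, ∫⁻ x, g i x ∂μ ≤ ∫⁻ x, ∑ i ∈ s, g i x ∂μ := by
  classical
  induction s using Finset.induction with
  | empty => simp
  | insert a s ha ih =>
    simp only [Finset.sum_insert ha]
    exact (add_le_add_right ih _).trans (le_lintegral_add _ _)

theorem tsum_lintegral_le_lintegral_tsum {ι : Type*} (g : ι → X → ℝ≥0∞) :
    ∑' i, ∫⁻ x, g i x ∂μ ≤ ∫⁻ x, ∑' i, g i x ∂μ :=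
  ENNReal.summable.tsum_le_of_sum_le fun s =>
    (sum_lintegral_le_lintegral_sum s g).trans
      (lintegral_mono fun _ => ENNReal.sum_le_tsum s)

/-- Either the sum is infinite or only countably many sets occur. -/
theorem measure_sUnion_le_tsum {𝒜 : Set (Set X)} (h𝒜 : ∀ A ∈ 𝒜, μ A ≠ 0) :
    μ (⋃₀ 𝒜) ≤ ∑' A : 𝒜, μ A := by
  by_cases htop : ∑' A : 𝒜, μ A = ⊤
  · exact htop ▸ le_top
  have hsupp : Function.support (fun A : 𝒜 => μ A) = univ :=
    eq_univ_of_forall fun A => h𝒜 A A.2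
  have : Countable 𝒜 := by
    simpa [hsupp, countable_univ_iff] using Summable.countable_support_ennreal htop
  rw [sUnion_eq_iUnion]
  exact measure_iUnion_le _

theorem tsum_setLIntegral_le_of_encard_le {𝒜 : Set (Set X)} (hmeas : ∀ A ∈ 𝒜, MeasurableSet A)
    {D : ℕ} (hD : ∀ x, {A ∈ 𝒜 | x ∈ A}.encard ≤ D) (f : X → ℝ≥0∞) :
    ∑' A : 𝒜, ∫⁻ x in A, f x ∂μ ≤ D * ∫⁻ x, f x ∂μ := by
  have hpoint : ∀ x, ∑' A : 𝒜, (A : Set X).indicator f x ≤ D * f x := fun x =>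
    calc ∑' A : 𝒜, (A : Set X).indicator f x
        = ∑' A : Set X, {A ∈ 𝒜 | x ∈ A}.indicator (fun _ => f x) A := by
          rw [tsum_subtype 𝒜 fun A => A.indicator f x]
          congr 1 with A
          by_cases hA : A ∈ 𝒜 <;> by_cases hx : x ∈ A <;> simp [hA, hx]
      _ = {A ∈ 𝒜 | x ∈ A}.encard * f x := by
          rw [← tsum_subtype, ENNReal.tsum_set_const]
      _ ≤ D * f x := by
          gcongr
          exact_mod_cast hD x
  calc ∑' A : 𝒜, ∫⁻ x in A, f x ∂μ = ∑' A : 𝒜, ∫⁻ x, (A : Set X).indicator f x ∂μ := by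
        congr 1 with A
        rw [lintegral_indicator (hmeas A A.2)]
    _ ≤ ∫⁻ x, ∑' A : 𝒜, (A : Set X).indicator f x ∂μ := tsum_lintegral_le_lintegral_tsum _
    _ ≤ ∫⁻ x, D * f x ∂μ := lintegral_mono hpoint
    _ = D * ∫⁻ x, f x ∂μ := lintegral_const_mul' _ _ (natCast_ne_top D)

end MeasureTheory

section MaximalOperator

variable {X : Type*} [MeasurableSpace X] {μ : Measure X} {𝓑 : Set (Set X)}

theorem lt_maxOpM_iff {f : X → ℝ≥0∞} {t : ℝ≥0∞} {x : X} :
    t < maxOpM μ 𝓑 f x ↔ ∃ B ∈ 𝓑, x ∈ B ∧ t < (∫⁻ y in B, f y ∂μ) / μ B := by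
  simp only [maxOpM, lt_iSup_iff, exists_prop]

theorem maxOpM_le_maxOpM_add {f g : X → ℝ≥0∞} {c : ℝ≥0∞} (hfg : ∀ y, f y ≤ g y + c) (x : X) :
    maxOpM μ 𝓑 f x ≤ maxOpM μ 𝓑 g x + c := by
  refine iSup₂_le fun B hB => iSup_le fun hxB => ?_
  calc (∫⁻ y in B, f y ∂μ) / μ B
      ≤ ((∫⁻ y in B, g y ∂μ) + c * μ B) / μ B := by
        gcongr
        calc ∫⁻ y in B, f y ∂μ ≤ ∫⁻ y in B, g y + c ∂μ := lintegral_mono hfg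
          _ = (∫⁻ y in B, g y ∂μ) + c * μ B := by
            rw [lintegral_add_right _ measurable_const, setLIntegral_const]
    _ = (∫⁻ y in B, g y ∂μ) / μ B + c * (μ B / μ B) := by rw [ENNReal.add_div, mul_div_assoc]
    _ ≤ maxOpM μ 𝓑 g x + c * 1 := by
        gcongr
        · exact le_iSup₂_of_le B hB (le_iSup_of_le hxB le_rfl)
        · exact ENNReal.div_self_le_one
    _ = maxOpM μ 𝓑 g x + c := by rw [mul_one]

namespace BesicovitchCond

variable {D : ℕ}

theorem mul_measure_lt_maxOpM_le (hB : BesicovitchCond 𝓑 D) (hmeas : ∀ B ∈ 𝓑, MeasurableSet B)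
    (f : X → ℝ≥0∞) (t : ℝ≥0∞) :
    t * μ {x | t < maxOpM μ 𝓑 f x} ≤ D * ∫⁻ x, f x ∂μ := by
  obtain ⟨𝒜', h𝒜', hunion, hoverlap⟩ :=
    hB {B ∈ 𝓑 | t < (∫⁻ y in B, f y ∂μ) / μ B} (sep_subset _ _)
  have hlarge : ∀ A ∈ 𝒜', A ∈ 𝓑 ∧ t < (∫⁻ y in A, f y ∂μ) / μ A := fun A hA => h𝒜' hA
  have hpos : ∀ A ∈ 𝒜', μ A ≠ 0 := fun A hA h0 => by
    simpa [Measure.restrict_eq_zero.mpr h0] using (hlarge A hA).2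
  have hcover : {x | t < maxOpM μ 𝓑 f x} ⊆ ⋃₀ 𝒜' := by
    rw [hunion]
    intro x hx
    obtain ⟨B, hB, hxB, hlt⟩ := lt_maxOpM_iff.mp hx
    exact ⟨B, ⟨hB, hlt⟩, hxB⟩
  calc t * μ {x | t < maxOpM μ 𝓑 f x} ≤ t * ∑' A : 𝒜', μ A := by
        gcongr
        exact (measure_mono hcover).trans (measure_sUnion_le_tsum hpos)
    _ = ∑' A : 𝒜', t * μ A := ENNReal.tsum_mul_left.symm
    _ ≤ ∑' A : 𝒜', ∫⁻ y in A, f y ∂μ :=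
        ENNReal.tsum_le_tsum fun A => mul_le_of_le_div (hlarge A A.2).2.le
    _ ≤ D * ∫⁻ x, f x ∂μ :=
        tsum_setLIntegral_le_of_encard_le (fun A hA => hmeas A (hlarge A hA).1) hoverlap f

theorem measure_lt_maxOpM_le (hB : BesicovitchCond 𝓑 D) (hmeas : ∀ B ∈ 𝓑, MeasurableSet B)
    (f : X → ℝ≥0∞) {t : ℝ≥0∞} (ht : 0 < t) :
    μ {x | t < maxOpM μ 𝓑 f x} ≤ D / t * ∫⁻ x, f x ∂μ := by
  rcases eq_or_ne t ⊤ with rfl | htop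
  · simp
  rw [mul_comm, ← mul_div_assoc, ENNReal.le_div_iff_mul_le (.inl ht.ne') (.inl htop), mul_comm,
    mul_comm _ (D : ℝ≥0∞)]
  exact hB.mul_measure_lt_maxOpM_le hmeas f t

theorem mul_measure_two_mul_lt_maxOpM_le (hB : BesicovitchCond 𝓑 D)
    (hmeas : ∀ B ∈ 𝓑, MeasurableSet B) (f : X → ℝ≥0∞) (t : ℝ≥0∞) :
    t * μ {x | 2 * t < maxOpM μ 𝓑 f x} ≤ D * ∫⁻ x, {y | t < f y}.indicator f x ∂μ := by
  rcases eq_or_ne t ⊤ with rfl | htop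
  · simp
  have hsplit : ∀ y, f y ≤ {y | t < f y}.indicator f y + t := fun y => by
    by_cases hy : t < f y <;> simp [hy, not_lt.mp]
  have hsub : {x | 2 * t < maxOpM μ 𝓑 f x} ⊆ {x | t < maxOpM μ 𝓑 ({y | t < f y}.indicator f) x} :=
    fun x hx => (ENNReal.add_lt_add_iff_right htop).mp <|
      (two_mul t ▸ hx).trans_le (maxOpM_le_maxOpM_add hsplit x)
  calc t * μ {x | 2 * t < maxOpM μ 𝓑 f x}
      ≤ t * μ {x | t < maxOpM μ 𝓑 ({y | t < f y}.indicator f) x} := by gcongr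
    _ ≤ D * ∫⁻ x, {y | t < f y}.indicator f x ∂μ := hB.mul_measure_lt_maxOpM_le hmeas _ t

end BesicovitchCond

end MaximalOperator

theorem ENNReal.rpow_sub_one_mul_self {p : ℝ} (hp : 1 ≤ p) (a : ℝ≥0∞) :
    a ^ (p - 1) * a = a ^ p := by
  simpa using (ENNReal.rpow_add_of_nonneg (x := a) (p - 1) 1 (sub_nonneg.mpr hp) zero_le_one).symm

noncomputable def dyadicSum (r : ℝ) (a : ℝ≥0∞) : ℝ≥0∞ :=
  ∑' k : ℤ, if (2 : ℝ≥0∞) ^ k < a then ((2 : ℝ≥0∞) ^ k) ^ r else 0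

theorem dyadicSum_top {r : ℝ} (hr : 0 < r) : dyadicSum r ⊤ = ⊤ := by
  refine top_le_iff.mp ?_
  calc (⊤ : ℝ≥0∞) = ∑' _ : ℕ, 1 := (ENNReal.tsum_const_eq_top_of_ne_zero one_ne_zero).symm
    _ ≤ ∑' n : ℕ, ((2 : ℝ≥0∞) ^ (n : ℤ)) ^ r :=
        ENNReal.tsum_le_tsum fun n => ENNReal.one_le_rpow (by simp [one_le_pow₀]) hr
    _ ≤ dyadicSum r ⊤ := by
        simpa [dyadicSum, ENNReal.zpow_lt_top two_ne_zero ofNat_ne_top] using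
          ENNReal.tsum_comp_le_tsum_of_injective Nat.cast_injective
            fun k : ℤ => ((2 : ℝ≥0∞) ^ k) ^ r

theorem rpow_le_two_rpow_mul_dyadicSum {r : ℝ} (hr : 0 < r) (a : ℝ≥0∞) :
    a ^ r ≤ 2 ^ r * dyadicSum r a := by
  rcases eq_or_ne a 0 with rfl | ha0
  · simp [ENNReal.zero_rpow_of_pos hr]
  rcases eq_or_ne a ⊤ with rfl | hatop
  · simp [dyadicSum_top hr]
  obtain ⟨K, hK, haK⟩ := ENNReal.exists_mem_Ioc_zpow ha0 hatop one_lt_two ofNat_ne_top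
  calc a ^ r ≤ ((2 : ℝ≥0∞) ^ (K + 1)) ^ r := by gcongr
    _ = 2 ^ r * ((2 : ℝ≥0∞) ^ K) ^ r := by
        rw [ENNReal.zpow_add two_ne_zero ofNat_ne_top, zpow_one,
          ENNReal.mul_rpow_of_nonneg _ _ hr.le, mul_comm]
    _ ≤ 2 ^ r * dyadicSum r a := by
        gcongr
        exact (if_pos hK).symm.trans_le (ENNReal.le_tsum K)

theorem one_sub_inv_two_rpow_ne_zero {r : ℝ} (hr : 0 < r) : 1 - ((2 : ℝ≥0∞) ^ r)⁻¹ ≠ 0 := by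
  rw [Ne, tsub_eq_zero_iff_le, not_le, ENNReal.inv_lt_one]
  exact ENNReal.one_lt_rpow one_lt_two hr

theorem dyadicSum_le {r : ℝ} (hr : 0 < r) (a : ℝ≥0∞) :
    dyadicSum r a ≤ (1 - (2 ^ r)⁻¹)⁻¹ * a ^ r := by
  rcases eq_or_ne a 0 with rfl | ha0
  · simp [dyadicSum]
  rcases eq_or_ne a ⊤ with rfl | hatop
  · rw [ENNReal.top_rpow_of_pos hr, ENNReal.mul_top (ENNReal.inv_ne_zero.mpr (by simp))]
    exact le_top
  obtain ⟨K, hK, haK⟩ := ENNReal.exists_mem_Ioc_zpow ha0 hatop one_lt_two ofNat_ne_top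
  set F : ℤ → ℝ≥0∞ := fun k => if (2 : ℝ≥0∞) ^ k < a then ((2 : ℝ≥0∞) ^ k) ^ r else 0
  have hinj : Function.Injective fun n : ℕ => K - n :=
    sub_right_injective.comp Nat.cast_injective
  have hsupp : Function.support F ⊆ Set.range fun n : ℕ => K - n := by
    intro k hk
    have hlt : (2 : ℝ≥0∞) ^ k < a := by by_contra h; simp [F, h] at hk
    have hkK : k ≤ K := by
      by_contra h
      exact (haK.trans (ENNReal.zpow_le_of_le one_le_two (by omega))).not_gt hlt
    exact ⟨(K - k).toNat, by simp [Int.toNat_of_nonneg (sub_nonneg.mpr hkK)]⟩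
  calc dyadicSum r a = ∑' n : ℕ, F (K - n) := (hinj.tsum_eq hsupp).symm
    _ ≤ ∑' n : ℕ, ((2 : ℝ≥0∞) ^ K) ^ r * ((2 ^ r)⁻¹) ^ n := by
        refine ENNReal.tsum_le_tsum fun n => ?_
        simp only [F]
        split_ifs
        · rw [ENNReal.zpow_sub two_ne_zero ofNat_ne_top, zpow_natCast,
            ENNReal.mul_rpow_of_nonneg _ _ hr.le, ENNReal.inv_rpow, ← ENNReal.rpow_natCast_mul,
            mul_comm (n : ℝ), ENNReal.rpow_mul_natCast, ENNReal.inv_pow]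
        · exact zero_le
    _ = ((2 : ℝ≥0∞) ^ K) ^ r * (1 - (2 ^ r)⁻¹)⁻¹ := by
        rw [ENNReal.tsum_mul_left, ENNReal.tsum_geometric]
    _ ≤ (1 - (2 ^ r)⁻¹)⁻¹ * a ^ r := by
        rw [mul_comm]
        gcongr

namespace MeasureTheory

variable {X : Type*} [MeasurableSpace X] {μ : Measure X}

theorem lintegral_dyadicSum_le (r : ℝ) (g : X → ℝ≥0∞) :
    ∫⁻ x, dyadicSum r (g x) ∂μ ≤ ∑' k : ℤ, ((2 : ℝ≥0∞) ^ k) ^ r * μ {x | 2 ^ k < g x} := by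
  -- measurable hulls of the level sets make `lintegral_tsum` applicable
  set E : ℤ → Set X := fun k => toMeasurable μ {x | 2 ^ k < g x}
  calc ∫⁻ x, dyadicSum r (g x) ∂μ
      ≤ ∫⁻ x, ∑' k : ℤ, (E k).indicator (fun _ => ((2 : ℝ≥0∞) ^ k) ^ r) x ∂μ := by
        refine lintegral_mono fun x => ENNReal.tsum_le_tsum fun k => ?_
        split_ifs with hk
        · rw [indicator_of_mem (subset_toMeasurable μ _ hk)]
        · exact zero_le
    _ = ∑' k : ℤ, ((2 : ℝ≥0∞) ^ k) ^ r * μ {x | 2 ^ k < g x} := by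
        rw [lintegral_tsum fun k =>
          (measurable_const.indicator (measurableSet_toMeasurable μ _)).aemeasurable]
        congr 1 with k
        rw [lintegral_indicator_const (measurableSet_toMeasurable μ _), measure_toMeasurable]

theorem tsum_mul_lintegral_indicator_le {p : ℝ} (hp : 1 < p) (f : X → ℝ≥0∞) :
    ∑' k : ℤ, ((2 : ℝ≥0∞) ^ k) ^ (p - 1) * ∫⁻ x, {y | 2 ^ k < f y}.indicator f x ∂μ ≤
      (1 - (2 ^ (p - 1))⁻¹)⁻¹ * ∫⁻ x, f x ^ p ∂μ := by
  have hp1 : 0 < p - 1 := sub_pos.mpr hp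
  have hpoint : ∀ x, ∑' k : ℤ, ((2 : ℝ≥0∞) ^ k) ^ (p - 1) * {y | 2 ^ k < f y}.indicator f x =
      dyadicSum (p - 1) (f x) * f x := fun x => by
    rw [dyadicSum, ← ENNReal.tsum_mul_right]
    congr 1 with k
    by_cases hk : 2 ^ k < f x <;> simp [hk]
  calc ∑' k : ℤ, ((2 : ℝ≥0∞) ^ k) ^ (p - 1) * ∫⁻ x, {y | 2 ^ k < f y}.indicator f x ∂μ
      = ∑' k : ℤ, ∫⁻ x, ((2 : ℝ≥0∞) ^ k) ^ (p - 1) * {y | 2 ^ k < f y}.indicator f x ∂μ := by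
        congr 1 with k
        rw [lintegral_const_mul' _ _
          (ENNReal.rpow_ne_top_of_nonneg hp1.le (ENNReal.zpow_ne_top two_ne_zero ofNat_ne_top k))]
    _ ≤ ∫⁻ x, dyadicSum (p - 1) (f x) * f x ∂μ :=
        (tsum_lintegral_le_lintegral_tsum _).trans_eq (lintegral_congr hpoint)
    _ ≤ ∫⁻ x, (1 - (2 ^ (p - 1))⁻¹)⁻¹ * (f x ^ (p - 1) * f x) ∂μ := by
        refine lintegral_mono fun x => ?_
        rw [← mul_assoc]
        gcongr
        exact dyadicSum_le hp1 (f x)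
    _ = (1 - (2 ^ (p - 1))⁻¹)⁻¹ * ∫⁻ x, f x ^ p ∂μ := by
        rw [← lintegral_const_mul' _ _ (ENNReal.inv_ne_top.mpr (one_sub_inv_two_rpow_ne_zero hp1))]
        simp only [ENNReal.rpow_sub_one_mul_self hp.le]

theorem lintegral_rpow_le_of_mul_measure_two_mul_lt_le {f g : X → ℝ≥0∞} {C : ℝ≥0∞} {p : ℝ}
    (hp : 1 < p)
    (hfg : ∀ t : ℝ≥0∞, t * μ {x | 2 * t < g x} ≤ C * ∫⁻ x, {y | t < f y}.indicator f x ∂μ) :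
    ∫⁻ x, g x ^ p ∂μ ≤ 2 ^ p * 2 ^ p * (1 - (2 ^ (p - 1))⁻¹)⁻¹ * C * ∫⁻ x, f x ^ p ∂μ := by
  have hp0 : 0 < p := zero_lt_one.trans hp
  have htwo_rpow : (2 : ℝ≥0∞) ^ p ≠ ⊤ := ENNReal.rpow_ne_top_of_nonneg hp0.le ofNat_ne_top
  have hshift : ∀ k : ℤ, ((2 : ℝ≥0∞) ^ (k + 1)) ^ p * μ {x | 2 ^ (k + 1) < g x} =
      2 ^ p * ((2 ^ k) ^ (p - 1) * (2 ^ k * μ {x | 2 * 2 ^ k < g x})) := fun k => by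
    rw [ENNReal.zpow_add two_ne_zero ofNat_ne_top, zpow_one, mul_comm _ (2 : ℝ≥0∞),
      ENNReal.mul_rpow_of_nonneg _ _ hp0.le, ← mul_assoc ((2 ^ k) ^ (p - 1)),
      ENNReal.rpow_sub_one_mul_self hp.le, mul_assoc]
  calc ∫⁻ x, g x ^ p ∂μ ≤ ∫⁻ x, 2 ^ p * dyadicSum p (g x) ∂μ :=
        lintegral_mono fun x => rpow_le_two_rpow_mul_dyadicSum hp0 (g x)
    _ = 2 ^ p * ∫⁻ x, dyadicSum p (g x) ∂μ := lintegral_const_mul' _ _ htwo_rpow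
    _ ≤ 2 ^ p * ∑' k : ℤ, ((2 : ℝ≥0∞) ^ k) ^ p * μ {x | 2 ^ k < g x} := by
        gcongr
        exact lintegral_dyadicSum_le p g
    _ = 2 ^ p * ∑' k : ℤ, ((2 : ℝ≥0∞) ^ (k + 1)) ^ p * μ {x | 2 ^ (k + 1) < g x} := by
        rw [← (Equiv.addRight (1 : ℤ)).tsum_eq]
        rfl
    _ = 2 ^ p * (2 ^ p * ∑' k : ℤ, (2 ^ k) ^ (p - 1) * (2 ^ k * μ {x | 2 * 2 ^ k < g x})) := by
        rw [tsum_congr hshift, ENNReal.tsum_mul_left]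
    _ ≤ 2 ^ p * (2 ^ p * ∑' k : ℤ, (2 ^ k) ^ (p - 1) *
          (C * ∫⁻ x, {y | 2 ^ k < f y}.indicator f x ∂μ)) := by
        gcongr 2 ^ p * (2 ^ p * ∑' k, _ * ?_) with k
        exact hfg _
    _ = 2 ^ p * 2 ^ p * C * ∑' k : ℤ, ((2 : ℝ≥0∞) ^ k) ^ (p - 1) *
          ∫⁻ x, {y | 2 ^ k < f y}.indicator f x ∂μ := by
        simp only [mul_left_comm _ C, ENNReal.tsum_mul_left, mul_assoc]
    _ ≤ 2 ^ p * 2 ^ p * C * ((1 - (2 ^ (p - 1))⁻¹)⁻¹ * ∫⁻ x, f x ^ p ∂μ) := by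
        gcongr
        exact tsum_mul_lintegral_indicator_le hp f
    _ = 2 ^ p * 2 ^ p * (1 - (2 ^ (p - 1))⁻¹)⁻¹ * C * ∫⁻ x, f x ^ p ∂μ := by ring

end MeasureTheory

theorem BesicovitchCond.lintegral_rpow_maxOpM_le {X : Type*} [MeasurableSpace X]
    {μ : Measure X} {𝓑 : Set (Set X)} {D : ℕ} (hB : BesicovitchCond 𝓑 D)
    (hmeas : ∀ B ∈ 𝓑, MeasurableSet B) {p : ℝ} (hp : 1 < p) (f : X → ℝ≥0∞) :
    ∫⁻ x, maxOpM μ 𝓑 f x ^ p ∂μ ≤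
      2 ^ p * 2 ^ p * (1 - (2 ^ (p - 1))⁻¹)⁻¹ * D * ∫⁻ x, f x ^ p ∂μ :=
  lintegral_rpow_le_of_mul_measure_two_mul_lt_le hp
    (hB.mul_measure_two_mul_lt_maxOpM_le hmeas f)

/-- Theorem 6.3: under the Besicovitch D-condition, the
maximal operator satisfies ‖M_μ‖_{L¹→L^{1,∞}} ≤ D and
‖M_μ‖_{L^p→L^p} ≤ c_p D^{1/p}, where c_p depends only on p. -/
theorem besicovitch_maximal_bounds (p : ℝ) (hp : 1 < p) :
    ∃ c : ℝ≥0∞, 0 < c ∧ c ≠ ⊤ ∧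
      ∀ (X : Type) [MeasurableSpace X],
        ∀ (μ : Measure X) (𝓑 : Set (Set X)) (D : ℕ),
          (∀ B ∈ 𝓑, MeasurableSet B) →
          BesicovitchCond 𝓑 D →
          (∀ (f : X → ℝ≥0∞) (t : ℝ≥0∞), 0 < t →
              μ {x | t < maxOpM μ 𝓑 f x} ≤ (D : ℝ≥0∞) / t * ∫⁻ x, f x ∂μ) ∧
          ∀ f : X → ℝ≥0∞,
            (∫⁻ x, (maxOpM μ 𝓑 f x) ^ p ∂μ) ^ (1 / p) ≤
              c * (D : ℝ≥0∞) ^ (1 / p) * (∫⁻ x, f x ^ p ∂μ) ^ (1 / p) := by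
  have hp0 : 0 < p := zero_lt_one.trans hp
  set K : ℝ≥0∞ := 2 ^ p * 2 ^ p * (1 - (2 ^ (p - 1))⁻¹)⁻¹
  have hK0 : K ≠ 0 := by simp [K]
  have htwo_rpow : (2 : ℝ≥0∞) ^ p ≠ ⊤ := ENNReal.rpow_ne_top_of_nonneg hp0.le ofNat_ne_top
  have hKtop : K ≠ ⊤ :=
    ENNReal.mul_ne_top (ENNReal.mul_ne_top htwo_rpow htwo_rpow)
      (ENNReal.inv_ne_top.mpr (one_sub_inv_two_rpow_ne_zero (sub_pos.mpr hp)))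
  refine ⟨K ^ (1 / p), ENNReal.rpow_pos (pos_iff_ne_zero.mpr hK0) hKtop,
    ENNReal.rpow_ne_top_of_nonneg (by positivity) hKtop, fun X _ μ 𝓑 D hmeas hB =>
      ⟨fun f _ ht => hB.measure_lt_maxOpM_le hmeas f ht, fun f => ?_⟩⟩
  calc (∫⁻ x, maxOpM μ 𝓑 f x ^ p ∂μ) ^ (1 / p) ≤ (K * D * ∫⁻ x, f x ^ p ∂μ) ^ (1 / p) := by
        gcongr
        exact hB.lintegral_rpow_maxOpM_le hmeas hp f
    _ = K ^ (1 / p) * (D : ℝ≥0∞) ^ (1 / p) * (∫⁻ x, f x ^ p ∂μ) ^ (1 / p) := by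
        rw [ENNReal.mul_rpow_of_nonneg _ _ (by positivity),
          ENNReal.mul_rpow_of_nonneg _ _ (by positivity)]
end

section
/- Let (X,ρ,M,μ) be a space of homogeneous type. Then for every ball B = B(x₀,r) there exists R with 2r ≤ R ≤ ∞ such that the ball B* = B(x₀,R) satisfies (i) every ball A with μ(A) ≤ 2μ(B) and A ∩ B ≠ ∅ is contained in B*, and (ii) μ(B*) ≤ C·μ(B), where C depends only on the doubling constant H and quasi-triangle constant D. -/
open MeasureTheory Set ENNReal

/-!
Let `K ≥ 1` be the doubling constant and `2 ^ m ≥ 6 D²`. Look at the dyadic balls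
`B(x₀, 2ⁿ r)` and take the first one whose measure exceeds `2 K^m μ(B)`. If there is none, the
whole space has measure at most `2 K^m μ(B)` and `B* = X` works. Otherwise, with `t = 2ⁿ r`, put
`B* = B(x₀, 3 D² t)`. A ball `B(c, s)` meeting `B` with `μ(B(c, s)) ≤ 2 μ(B)` has `s < t`: otherwise
it would swallow `B(x₀, t)` after `m` doublings. Hence it lies in `B*`, while `B*` is covered by
`m` doublings of the previous dyadic ball, so `μ(B*) ≤ 2 K^{2m} μ(B)`.
-/

def qball {X : Type*} (ρ : X → X → ℝ) (x : X) (r : ℝ) : Set X := {y | ρ x y < r}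

section QuasiMetric

variable {X : Type*} {ρ : X → X → ℝ} {D : ℝ}

theorem qball_mono {x : X} {r r' : ℝ} (h : r ≤ r') : qball ρ x r ⊆ qball ρ x r' :=
  fun _ hy => lt_of_lt_of_le hy h

theorem iUnion_qball_two_pow_mul (x : X) {r : ℝ} (hr : 0 < r) :
    ⋃ n : ℕ, qball ρ x (2 ^ n * r) = univ := by
  refine eq_univ_of_forall fun y => mem_iUnion.2 ?_
  obtain ⟨n, hn⟩ := pow_unbounded_of_one_lt (ρ x y / r) one_lt_two
  exact ⟨n, (div_lt_iff₀ hr).1 hn⟩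

theorem qball_subset_qball_of_inter_nonempty (hD : 0 < D) (hsymm : ∀ x y, ρ x y = ρ y x)
    (htri : ∀ x y z, ρ x y ≤ D * (ρ x z + ρ z y)) {c x : X} {s r : ℝ}
    (hinter : (qball ρ c s ∩ qball ρ x r).Nonempty) (t : ℝ) :
    qball ρ x t ⊆ qball ρ c (D * (D * (s + r) + t)) := by
  obtain ⟨z, hzc, hzx⟩ := hinter
  have hcx : ρ c x < D * (s + r) := by
    calc ρ c x ≤ D * (ρ c z + ρ z x) := htri c x z
      _ < D * (s + r) := by
        rw [hsymm z x]
        exact mul_lt_mul_of_pos_left (add_lt_add hzc hzx) hD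
  intro y hy
  calc ρ c y ≤ D * (ρ c x + ρ x y) := htri c y x
    _ < D * (D * (s + r) + t) := mul_lt_mul_of_pos_left (add_lt_add hcx hy) hD

end QuasiMetric

section Doubling

variable {X : Type*} [MeasurableSpace X] {μ : Measure X} {ρ : X → X → ℝ} {K : ℝ≥0∞}

theorem measure_qball_two_pow_mul_le
    (hdoub : ∀ x r, 0 < r → μ (qball ρ x (2 * r)) ≤ K * μ (qball ρ x r)) (x : X) {r : ℝ}
    (hr : 0 < r) (k : ℕ) : μ (qball ρ x (2 ^ k * r)) ≤ K ^ k * μ (qball ρ x r) := by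
  induction k with
  | zero => simp
  | succ k ih =>
    calc μ (qball ρ x (2 ^ (k + 1) * r)) = μ (qball ρ x (2 * (2 ^ k * r))) := by ring_nf
      _ ≤ K * μ (qball ρ x (2 ^ k * r)) := hdoub x _ (by positivity)
      _ ≤ K * (K ^ k * μ (qball ρ x r)) := by gcongr
      _ = K ^ (k + 1) * μ (qball ρ x r) := by ring

theorem measure_qball_le_pow_mul
    (hdoub : ∀ x r, 0 < r → μ (qball ρ x (2 * r)) ≤ K * μ (qball ρ x r)) (x : X) {r v : ℝ}
    (hr : 0 < r) {k : ℕ} (hv : v ≤ 2 ^ k * r) : μ (qball ρ x v) ≤ K ^ k * μ (qball ρ x r) :=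
  (measure_mono (qball_mono hv)).trans (measure_qball_two_pow_mul_le hdoub x hr k)

theorem measure_univ_le_of_measure_qball_two_pow_mul_le (x : X) {r : ℝ} (hr : 0 < r)
    {a : ℝ≥0∞} (h : ∀ n : ℕ, μ (qball ρ x (2 ^ n * r)) ≤ a) : μ univ ≤ a := by
  have hmono : Monotone fun n : ℕ => qball ρ x (2 ^ n * r) := fun i j hij =>
    qball_mono (by gcongr; exact one_le_two)
  rw [← iUnion_qball_two_pow_mul x hr, hmono.measure_iUnion]
  exact iSup_le h

variable {D : ℝ} {m : ℕ}

theorem qball_subset_of_measure_qball_lt (hD : 1 ≤ D) (hsymm : ∀ x y, ρ x y = ρ y x)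
    (htri : ∀ x y z, ρ x y ≤ D * (ρ x z + ρ z y))
    (hdoub : ∀ x r, 0 < r → μ (qball ρ x (2 * r)) ≤ K * μ (qball ρ x r))
    (hm : 6 * D ^ 2 ≤ 2 ^ m) {x₀ c : X} {r s t : ℝ} (hr : 0 < r) (hrt : r ≤ t)
    (hlarge : 2 * K ^ m * μ (qball ρ x₀ r) < μ (qball ρ x₀ t))
    (hμ : μ (qball ρ c s) ≤ 2 * μ (qball ρ x₀ r))
    (hinter : (qball ρ c s ∩ qball ρ x₀ r).Nonempty) :
    qball ρ c s ⊆ qball ρ x₀ (3 * D ^ 2 * t) := by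
  have hD0 : 0 < D := by linarith
  have hst : s < t := by
    by_contra! hts
    have hs : 0 < s := by linarith
    have hradius : D * (D * (s + r) + t) ≤ 2 ^ m * s := by
      nlinarith [mul_le_mul_of_nonneg_left (hrt.trans hts) (sq_nonneg D),
        mul_le_mul_of_nonneg_left hts hD0.le, mul_le_mul_of_nonneg_right hD hs.le]
    have hswallow : μ (qball ρ x₀ t) ≤ 2 * K ^ m * μ (qball ρ x₀ r) :=
      calc μ (qball ρ x₀ t) ≤ μ (qball ρ c (D * (D * (s + r) + t))) :=
            measure_mono (qball_subset_qball_of_inter_nonempty hD0 hsymm htri hinter t)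
        _ ≤ K ^ m * μ (qball ρ c s) := measure_qball_le_pow_mul hdoub c hs hradius
        _ ≤ K ^ m * (2 * μ (qball ρ x₀ r)) := by gcongr
        _ = 2 * K ^ m * μ (qball ρ x₀ r) := by ring
    exact hlarge.not_ge hswallow
  rw [inter_comm] at hinter
  refine (qball_subset_qball_of_inter_nonempty hD0 hsymm htri hinter s).trans (qball_mono ?_)
  nlinarith [mul_le_mul_of_nonneg_left hrt (sq_nonneg D), mul_lt_mul_of_pos_left hst hD0,
    mul_le_mul_of_nonneg_right hD (hr.le.trans hrt)]

theorem exists_hull (hD : 1 ≤ D) (hK : 1 ≤ K) (hsymm : ∀ x y, ρ x y = ρ y x)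
    (htri : ∀ x y z, ρ x y ≤ D * (ρ x z + ρ z y))
    (hdoub : ∀ x r, 0 < r → μ (qball ρ x (2 * r)) ≤ K * μ (qball ρ x r))
    (hm : 6 * D ^ 2 ≤ 2 ^ m) (x₀ : X) {r : ℝ} (hr : 0 < r) :
    ∃ Bstar : Set X, ((∃ R : ℝ, 2 * r ≤ R ∧ Bstar = qball ρ x₀ R) ∨ Bstar = univ) ∧
      (∀ (c : X) (s : ℝ), μ (qball ρ c s) ≤ 2 * μ (qball ρ x₀ r) →
        (qball ρ c s ∩ qball ρ x₀ r).Nonempty → qball ρ c s ⊆ Bstar) ∧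
      μ Bstar ≤ 2 * K ^ (2 * m) * μ (qball ρ x₀ r) := by
  classical
  set B := μ (qball ρ x₀ r)
  have hCB : 2 * K ^ m * B ≤ 2 * K ^ (2 * m) * B := by
    gcongr 2 * ?_ * B
    exact pow_le_pow_right₀ hK (by omega)
  by_cases hlarge : ∃ n : ℕ, 2 * K ^ m * B < μ (qball ρ x₀ (2 ^ n * r))
  swap
  · push Not at hlarge
    exact ⟨univ, Or.inr rfl, fun _ _ _ _ => subset_univ _,
      (measure_univ_le_of_measure_qball_two_pow_mul_le x₀ hr hlarge).trans hCB⟩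
  have hn0 : Nat.find hlarge ≠ 0 := by
    intro h0
    have h := Nat.find_spec hlarge
    rw [h0, pow_zero, one_mul] at h
    refine h.not_ge (le_mul_of_one_le_left' ?_)
    calc (1 : ℝ≥0∞) ≤ K ^ m := one_le_pow₀ hK
      _ ≤ 2 * K ^ m := le_mul_of_one_le_left' one_le_two
  obtain ⟨k, hk⟩ := Nat.exists_eq_succ_of_ne_zero hn0
  have hlarge_k : 2 * K ^ m * B < μ (qball ρ x₀ (2 ^ (k + 1) * r)) := by
    simpa only [hk] using Nat.find_spec hlarge
  have hsmall_k : μ (qball ρ x₀ (2 ^ k * r)) ≤ 2 * K ^ m * B :=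
    not_lt.1 (Nat.find_min hlarge (by omega))
  have h2r : 2 * r ≤ 2 ^ (k + 1) * r := by
    gcongr; exact le_self_pow₀ one_le_two (by omega)
  have hD2 : 1 ≤ 3 * D ^ 2 := by nlinarith
  refine ⟨qball ρ x₀ (3 * D ^ 2 * (2 ^ (k + 1) * r)),
    Or.inl ⟨_, h2r.trans (le_mul_of_one_le_left (by positivity) hD2), rfl⟩,
    fun c s hμ hinter => qball_subset_of_measure_qball_lt hD hsymm htri hdoub hm hr
      (by linarith) hlarge_k hμ hinter, ?_⟩
  calc μ (qball ρ x₀ (3 * D ^ 2 * (2 ^ (k + 1) * r)))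
      ≤ K ^ m * μ (qball ρ x₀ (2 ^ k * r)) :=
        measure_qball_le_pow_mul hdoub x₀ (by positivity) (by
          rw [pow_succ (2 : ℝ) k]
          linarith [mul_le_mul_of_nonneg_right hm (by positivity : (0 : ℝ) ≤ 2 ^ k * r)])
    _ ≤ K ^ m * (2 * K ^ m * B) := by gcongr
    _ = 2 * K ^ (2 * m) * B := by ring

end Doubling

theorem homogeneous_hull_exists_general (D H : ℝ) (hD : 1 < D) :
    ∃ C : ℝ≥0∞, 0 < C ∧ C ≠ ⊤ ∧
      ∀ (X : Type) [MeasurableSpace X],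
        ∀ (μ : Measure X) (ρ : X → X → ℝ),
          (∀ x y, 0 ≤ ρ x y) →
          (∀ x y, ρ x y = 0 ↔ x = y) →
          (∀ x y, ρ x y = ρ y x) →
          (∀ x y z, ρ x y ≤ D * (ρ x z + ρ z y)) →
          (∀ (x : X) (r : ℝ), MeasurableSet {y | ρ x y < r}) →
          (∀ (x : X) (r : ℝ), 0 < r →
            μ {y | ρ x y < 2 * r} ≤ ENNReal.ofReal H * μ {y | ρ x y < r}) →
          ∀ (x₀ : X) (r : ℝ), 0 < r →
            ∃ Bstar : Set X,
              ((∃ R : ℝ, 2 * r ≤ R ∧ Bstar = {y | ρ x₀ y < R}) ∨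
                Bstar = Set.univ) ∧
              (∀ (c : X) (s : ℝ), 0 < s →
                μ {y | ρ c y < s} ≤ 2 * μ {y | ρ x₀ y < r} →
                ({y | ρ c y < s} ∩ {y | ρ x₀ y < r}).Nonempty →
                {y | ρ c y < s} ⊆ Bstar) ∧
              μ Bstar ≤ C * μ {y | ρ x₀ y < r} := by
  obtain ⟨m, hm⟩ := pow_unbounded_of_one_lt (6 * D ^ 2 : ℝ) one_lt_two
  set K : ℝ≥0∞ := max (ENNReal.ofReal H) 1
  have hK : 1 ≤ K := le_max_right _ _
  refine ⟨2 * K ^ (2 * m), ?_, ?_, ?_⟩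
  · exact ENNReal.mul_pos two_ne_zero (pow_ne_zero _ (one_pos.trans_le hK).ne')
  · exact mul_ne_top ofNat_ne_top (pow_ne_top (max_ne_top ofReal_ne_top one_ne_top))
  intro X _ μ ρ _ _ hsymm htri _ hdoub x₀ r hr
  have hdoubK : ∀ x r, 0 < r → μ (qball ρ x (2 * r)) ≤ K * μ (qball ρ x r) :=
    fun x r hr => (hdoub x r hr).trans (mul_le_mul_left (le_max_left _ _) _)
  obtain ⟨Bstar, hshape, hcontains, hmeasure⟩ :=
    exists_hull hD.le hK hsymm htri hdoubK hm.le x₀ hr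
  exact ⟨Bstar, hshape, fun c s _ => hcontains c s, hmeasure⟩

/-- Lemma 7.5: in a space of homogeneous type every ball
B = B(x₀,r) has a hull B* = B(x₀,R) with 2r ≤ R ≤ ∞ (B(x₀,∞) = X), i.e.
B* contains every ball A with μ(A) ≤ 2μ(B) meeting B, and μ(B*) ≤ C μ(B)
with C depending only on the doubling constant H and the quasi-triangle
constant D. -/
theorem homogeneous_hull_exists (D H : ℝ) (hD : 1 < D) (hH : 0 < H) :
    ∃ C : ℝ≥0∞, 0 < C ∧ C ≠ ⊤ ∧
      ∀ (X : Type) [MeasurableSpace X],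
        ∀ (μ : Measure X) (ρ : X → X → ℝ),
          (∀ x y, 0 ≤ ρ x y) →
          (∀ x y, ρ x y = 0 ↔ x = y) →
          (∀ x y, ρ x y = ρ y x) →
          (∀ x y z, ρ x y ≤ D * (ρ x z + ρ z y)) →
          (∀ (x : X) (r : ℝ), MeasurableSet {y | ρ x y < r}) →
          (∀ (x : X) (r : ℝ), 0 < r →
            μ {y | ρ x y < 2 * r} ≤ ENNReal.ofReal H * μ {y | ρ x y < r}) →
          ∀ (x₀ : X) (r : ℝ), 0 < r →
            ∃ Bstar : Set X,
              ((∃ R : ℝ, 2 * r ≤ R ∧ Bstar = {y | ρ x₀ y < R}) ∨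
                Bstar = Set.univ) ∧
              (∀ (c : X) (s : ℝ), 0 < s →
                μ {y | ρ c y < s} ≤ 2 * μ {y | ρ x₀ y < r} →
                ({y | ρ c y < s} ∩ {y | ρ x₀ y < r}).Nonempty →
                {y | ρ c y < s} ⊆ Bstar) ∧
              μ Bstar ≤ C * μ {y | ρ x₀ y < r} :=
  homogeneous_hull_exists_general D H hD
end

section
/- Let (X,M,μ) be a measure space with a martingale filtration: a collection B = ∪_{n∈ℤ} B_n where each B_n is a countable partition of X, each A ∈ B_n is a union of sets from B_{n+1}, B generates M, and any two points lie in a common element of B. Let T be the martingale transform Tf = Σ_{A∈B} ε_A Δ_A f with ε_A = ±1, where Δ_A f = Σ_{B: pr(B)=A} (⟨f⟩_B − ⟨f⟩_A) 1_B. Then for every A ∈ B, x ∈ A, and f ∈ L¹(X) supported in pr(A) \ A, |Tf(x)| ≤ 2⟨f⟩_{pr(A)}, where ⟨f⟩_E = μ(E)^{-1}∫_E |f| dμ and pr(A) is the minimal element of B strictly containing A. -/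
/-!
Since `f` vanishes on `A`, the only martingale differences that can be nonzero at `x ∈ A` are
those of the strict ancestors `P_{k+1} = pr^{k+1} A` (the levels `𝓑n` force every element of `𝓑`
containing `A` to be some `pr^k A`), and there `Δ_{P_{k+1}} f(x) = a_k - a_{k+1}`
with `a_k = ⟨f⟩_{P_k}`. Now `a_0 = 0` and `a_{k+1} = I / μ(P_{k+1})` with `I = ∫_{pr A} f`, so the
`|a_k|` decrease from `k = 1` on and the total variation of `(a_k)` is at most `2 |a_1|`.
-/

open MeasureTheory Set ENNReal

theorem abs_tsum_mul_sub_le {ε a u : ℕ → ℝ} {c : ℝ} (hε : ∀ k, |ε k| ≤ 1) (hu : Antitone u)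
    (hu0 : ∀ k, 0 ≤ u k) (ha0 : a 0 = 0) (ha : ∀ k, a (k + 1) = c * u k) :
    |∑' k, ε k * (a k - a (k + 1))| ≤ 2 * |c| * u 0 := by
  have hterm : ∀ k, |ε k * (a k - a (k + 1))| ≤ |a k - a (k + 1)| := fun k => by
    rw [abs_mul]
    exact mul_le_of_le_one_left (abs_nonneg _) (hε k)
  have hvar : ∀ k, |a (k + 1) - a (k + 2)| = |c| * (u k - u (k + 1)) := fun k => by
    rw [ha, ha, ← mul_sub, abs_mul, abs_of_nonneg (sub_nonneg.mpr (hu k.le_succ))]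
  have hpartial : ∀ n, ∑ k ∈ Finset.range n, |ε k * (a k - a (k + 1))| ≤ 2 * |c| * u 0 := by
    rintro (_ | n)
    · simpa using mul_nonneg (mul_nonneg zero_le_two (abs_nonneg c)) (hu0 0)
    calc ∑ k ∈ Finset.range (n + 1), |ε k * (a k - a (k + 1))|
        ≤ ∑ k ∈ Finset.range (n + 1), |a k - a (k + 1)| := Finset.sum_le_sum fun k _ => hterm k
      _ = |c| * (u 0 - u n) + |c| * u 0 := by
        rw [Finset.sum_range_succ', Finset.sum_congr rfl fun k _ => hvar k, ← Finset.mul_sum,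
          Finset.sum_range_sub', ha0, ha, zero_sub, abs_neg, abs_mul, abs_of_nonneg (hu0 0)]
      _ ≤ 2 * |c| * u 0 := by nlinarith [abs_nonneg c, hu0 n]
  have hsum : Summable fun k => ‖ε k * (a k - a (k + 1))‖ :=
    summable_of_sum_range_le (fun _ => norm_nonneg _) hpartial
  exact (norm_tsum_le_tsum_norm hsum).trans
    (Real.tsum_le_of_sum_range_le (fun _ => norm_nonneg _) hpartial)

section

variable {X : Type*}

section Levels

variable {𝓑n : ℤ → Set (Set X)}

theorem exists_mem_level_subset
    (hrefine : ∀ n, ∀ A ∈ 𝓑n n, A = ⋃₀ {B ∈ 𝓑n (n + 1) | B ⊆ A})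
    {n m : ℤ} (hnm : n ≤ m) {B : Set X} (hB : B ∈ 𝓑n n) {z : X} (hz : z ∈ B) :
    ∃ C ∈ 𝓑n m, z ∈ C ∧ C ⊆ B := by
  induction m, hnm using Int.leInduction with
  | base => exact ⟨B, hB, hz, subset_rfl⟩
  | succ m _ ih =>
    obtain ⟨C, hC, hzC, hCB⟩ := ih
    rw [hrefine m C hC] at hzC
    obtain ⟨D, ⟨hD, hDC⟩, hzD⟩ := hzC
    exact ⟨D, hD, hzD, hDC.trans hCB⟩

theorem subset_of_le_of_mem_of_mem (hdisj : ∀ n, (𝓑n n).Pairwise Disjoint)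
    (hrefine : ∀ n, ∀ A ∈ 𝓑n n, A = ⋃₀ {B ∈ 𝓑n (n + 1) | B ⊆ A})
    {n m : ℤ} (hnm : n ≤ m) {B B' : Set X} (hB : B ∈ 𝓑n n) (hB' : B' ∈ 𝓑n m) {z : X}
    (hzB : z ∈ B) (hzB' : z ∈ B') : B' ⊆ B := by
  obtain ⟨C, hC, hzC, hCB⟩ := exists_mem_level_subset hrefine hnm hB hzB
  obtain rfl : C = B' :=
    (hdisj m).eq hC hB' (not_disjoint_iff.mpr ⟨z, hzC, hzB'⟩)
  exact hCB

theorem subset_or_subset_of_mem_of_mem (hdisj : ∀ n, (𝓑n n).Pairwise Disjoint)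
    (hrefine : ∀ n, ∀ A ∈ 𝓑n n, A = ⋃₀ {B ∈ 𝓑n (n + 1) | B ⊆ A}) :
    ∀ B ∈ ⋃ n, 𝓑n n, ∀ B' ∈ ⋃ n, 𝓑n n, ∀ z ∈ B, z ∈ B' → B ⊆ B' ∨ B' ⊆ B := by
  intro B hB B' hB' z hzB hzB'
  obtain ⟨n, hn⟩ := mem_iUnion.mp hB
  obtain ⟨n', hn'⟩ := mem_iUnion.mp hB'
  rcases le_total n n' with h | h
  · exact .inr (subset_of_le_of_mem_of_mem hdisj hrefine h hn hn' hzB hzB')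
  · exact .inl (subset_of_le_of_mem_of_mem hdisj hrefine h hn' hn hzB' hzB)

theorem lt_of_ssubset_of_mem_of_mem (hdisj : ∀ n, (𝓑n n).Pairwise Disjoint)
    (hrefine : ∀ n, ∀ A ∈ 𝓑n n, A = ⋃₀ {B ∈ 𝓑n (n + 1) | B ⊆ A})
    {n m : ℤ} {B B' : Set X} (hB : B ∈ 𝓑n n) (hB' : B' ∈ 𝓑n m) (hne : B.Nonempty)
    (h : B ⊂ B') : m < n := by
  by_contra! hnm
  obtain ⟨z, hz⟩ := hne
  exact h.not_superset (subset_of_le_of_mem_of_mem hdisj hrefine hnm hB hB' hz (h.subset hz))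

end Levels

structure IsParentMap (𝓑 : Set (Set X)) (pr : Set X → Set X) : Prop where
  mem : ∀ A ∈ 𝓑, pr A ∈ 𝓑
  ssubset : ∀ A ∈ 𝓑, A ⊂ pr A
  subset_of_ssubset : ∀ A ∈ 𝓑, ∀ C ∈ 𝓑, A ⊂ C → pr A ⊆ C

namespace IsParentMap

variable {𝓑 : Set (Set X)} {pr : Set X → Set X}

theorem iterate_mem (hpr : IsParentMap 𝓑 pr) {A : Set X} (hA : A ∈ 𝓑) (k : ℕ) :
    pr^[k] A ∈ 𝓑 := by
  induction k with
  | zero => exact hA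
  | succ k ih => rw [Function.iterate_succ_apply']; exact hpr.mem _ ih

theorem strictMono_iterate (hpr : IsParentMap 𝓑 pr) {A : Set X} (hA : A ∈ 𝓑) :
    StrictMono fun k => pr^[k] A :=
  strictMono_nat_of_lt_succ fun k => by
    rw [Function.iterate_succ_apply']
    exact hpr.ssubset _ (hpr.iterate_mem hA k)

theorem eq_of_pr_eq (hpr : IsParentMap 𝓑 pr)
    (hnest : ∀ B ∈ 𝓑, ∀ B' ∈ 𝓑, ∀ z ∈ B, z ∈ B' → B ⊆ B' ∨ B' ⊆ B)
    {B B' : Set X} (hB : B ∈ 𝓑) (hB' : B' ∈ 𝓑) (h : pr B = pr B') {z : X}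
    (hzB : z ∈ B) (hzB' : z ∈ B') : B = B' := by
  wlog hsub : B ⊆ B' generalizing B B'
  · exact (this hB' hB h.symm hzB' hzB ((hnest B hB B' hB' z hzB hzB').resolve_left hsub)).symm
  by_contra hne
  have : pr B' ⊆ B' := h ▸ hpr.subset_of_ssubset B hB B' hB' (hsub.ssubset_of_ne hne)
  exact (hpr.ssubset B' hB').not_superset this

theorem exists_iterate_eq {𝓑n : ℤ → Set (Set X)} (hdisj : ∀ n, (𝓑n n).Pairwise Disjoint)
    (hrefine : ∀ n, ∀ A ∈ 𝓑n n, A = ⋃₀ {B ∈ 𝓑n (n + 1) | B ⊆ A})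
    (hpr : IsParentMap (⋃ n, 𝓑n n) pr) (hne : ∀ B ∈ ⋃ n, 𝓑n n, B.Nonempty)
    {A B : Set X} (hA : A ∈ ⋃ n, 𝓑n n) (hB : B ∈ ⋃ n, 𝓑n n) (hAB : A ⊆ B) :
    ∃ k, pr^[k] A = B := by
  obtain ⟨n, hn⟩ := mem_iUnion.mp hA
  obtain ⟨m, hm⟩ := mem_iUnion.mp hB
  obtain ⟨d, hd⟩ : ∃ d : ℕ, n - m ≤ d := ⟨(n - m).toNat, Int.self_le_toNat _⟩
  induction d generalizing A n with
  | zero =>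
    rcases hAB.eq_or_ssubset with rfl | hAB
    · exact ⟨0, rfl⟩
    · have := lt_of_ssubset_of_mem_of_mem hdisj hrefine hn hm (hne A hA) hAB
      omega
  | succ d ih =>
    rcases hAB.eq_or_ssubset with rfl | hAB
    · exact ⟨0, rfl⟩
    obtain ⟨n', hn'⟩ := mem_iUnion.mp (hpr.mem A hA)
    have := lt_of_ssubset_of_mem_of_mem hdisj hrefine hn hn' (hne A hA) (hpr.ssubset A hA)
    obtain ⟨k, hk⟩ := ih (hpr.mem A hA) (hpr.subset_of_ssubset A hA B hB hAB) n' hn' (by omega)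
    exact ⟨k + 1, by rwa [Function.iterate_succ_apply]⟩

end IsParentMap

section MartingaleDifferences

variable [MeasurableSpace X] {μ : Measure X} {𝓑 : Set (Set X)} {pr : Set X → Set X}
  {f : X → ℝ}

noncomputable def avg (μ : Measure X) (f : X → ℝ) (E : Set X) : ℝ :=
  (∫ y in E, f y ∂μ) / (μ E).toReal

theorem avg_eq_zero {E : Set X} (hf : ∀ y ∈ E, f y = 0) : avg μ f E = 0 := by
  rw [avg, setIntegral_eq_zero_of_forall_eq_zero hf, zero_div]

theorem avg_eq_of_subset {E F : Set X} (hf : ∀ y ∉ E, f y = 0) (hEF : E ⊆ F) :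
    avg μ f F = (∫ y in E, f y ∂μ) * (μ F).toReal⁻¹ := by
  rw [avg, setIntegral_eq_integral_of_forall_compl_eq_zero fun y hy => hf y fun h => hy (hEF h),
    setIntegral_eq_integral_of_forall_compl_eq_zero hf, div_eq_mul_inv]

theorem antitone_toReal_measure_inv {s : ℕ → Set X}
    (hs : Monotone s) (hpos : ∀ k, 0 < μ (s k)) (hfin : ∀ k, μ (s k) < ⊤) :
    Antitone fun k => (μ (s k)).toReal⁻¹ := fun _ l hkl =>
  inv_anti₀ (ENNReal.toReal_pos (hpos _).ne' (hfin _).ne)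
    (ENNReal.toReal_mono (hfin l).ne (measure_mono (hs hkl)))

noncomputable def martingaleDiff (μ : Measure X) (𝓑 : Set (Set X)) (pr : Set X → Set X)
    (C : Set X) (f : X → ℝ) (x : X) : ℝ :=
  ∑' B : {B : Set X // B ∈ 𝓑 ∧ pr B = C},
    (B : Set X).indicator (fun _ => avg μ f B - avg μ f C) x

theorem martingaleDiff_eq_zero {C : Set X} {x : X} (h : ∀ B ∈ 𝓑, pr B = C → x ∉ B) :
    martingaleDiff μ 𝓑 pr C f x = 0 :=
  (tsum_congr fun B : {B : Set X // B ∈ 𝓑 ∧ pr B = C} =>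
    indicator_of_notMem (h B B.2.1 B.2.2) _).trans tsum_zero

theorem martingaleDiff_pr_apply (hpr : IsParentMap 𝓑 pr)
    (hnest : ∀ B ∈ 𝓑, ∀ B' ∈ 𝓑, ∀ z ∈ B, z ∈ B' → B ⊆ B' ∨ B' ⊆ B)
    {B : Set X} (hB : B ∈ 𝓑) {x : X} (hx : x ∈ B) :
    martingaleDiff μ 𝓑 pr (pr B) f x = avg μ f B - avg μ f (pr B) := by
  rw [martingaleDiff, tsum_eq_single ⟨B, hB, rfl⟩]
  · exact indicator_of_mem hx _
  · rintro ⟨B', hB', hpr'⟩ hne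
    exact indicator_of_notMem
      (fun hx' => hne (Subtype.ext (hpr.eq_of_pr_eq hnest hB' hB hpr' hx' hx))) _

theorem exists_iterate_pr_eq_of_martingaleDiff_ne_zero (hpr : IsParentMap 𝓑 pr)
    (hnest : ∀ B ∈ 𝓑, ∀ B' ∈ 𝓑, ∀ z ∈ B, z ∈ B' → B ⊆ B' ∨ B' ⊆ B)
    {A : Set X} (hA : A ∈ 𝓑) (hanc : ∀ B ∈ 𝓑, A ⊆ B → ∃ k, pr^[k] A = B)
    {x : X} (hx : x ∈ A) (hfA : ∀ y ∈ A, f y = 0) {C : Set X}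
    (hC : martingaleDiff μ 𝓑 pr C f x ≠ 0) : ∃ k, pr^[k + 1] A = C := by
  obtain ⟨B, hB, rfl, hxB⟩ : ∃ B ∈ 𝓑, pr B = C ∧ x ∈ B := by
    by_contra! h
    exact hC (martingaleDiff_eq_zero h)
  by_cases hAB : A ⊆ B
  · obtain ⟨k, rfl⟩ := hanc B hB hAB
    exact ⟨k, Function.iterate_succ_apply' pr k A⟩
  · have hBA : B ⊂ A :=
      ((hnest A hA B hB x hx hxB).resolve_left hAB).ssubset_of_not_superset hAB
    have hprA : pr B ⊆ A := hpr.subset_of_ssubset B hB A hA hBA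
    refine absurd ?_ hC
    rw [martingaleDiff_pr_apply hpr hnest hB hxB, avg_eq_zero fun y hy => hfA y (hBA.subset hy),
      avg_eq_zero fun y hy => hfA y (hprA hy), sub_zero]

theorem tsum_mul_martingaleDiff_eq_tsum_iterate (hpr : IsParentMap 𝓑 pr)
    (hnest : ∀ B ∈ 𝓑, ∀ B' ∈ 𝓑, ∀ z ∈ B, z ∈ B' → B ⊆ B' ∨ B' ⊆ B)
    {A : Set X} (hA : A ∈ 𝓑) (hanc : ∀ B ∈ 𝓑, A ⊆ B → ∃ k, pr^[k] A = B)
    {x : X} (hx : x ∈ A) (hfA : ∀ y ∈ A, f y = 0) (ε : Set X → ℝ) :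
    ∑' C : 𝓑, ε C * martingaleDiff μ 𝓑 pr C f x =
      ∑' k, ε (pr^[k + 1] A) * (avg μ f (pr^[k] A) - avg μ f (pr^[k + 1] A)) := by
  have hinj : Function.Injective fun k => (⟨pr^[k + 1] A, hpr.iterate_mem hA _⟩ : 𝓑) :=
    fun _ _ h => Nat.succ_injective ((hpr.strictMono_iterate hA).injective (congrArg Subtype.val h))
  rw [← hinj.tsum_eq]
  · refine tsum_congr fun k => ?_
    have hxk : x ∈ pr^[k] A := (hpr.strictMono_iterate hA).monotone k.zero_le hx
    dsimp only
    rw [Function.iterate_succ_apply', martingaleDiff_pr_apply hpr hnest (hpr.iterate_mem hA k) hxk]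
  · intro C hC
    obtain ⟨k, hk⟩ := exists_iterate_pr_eq_of_martingaleDiff_ne_zero hpr hnest hA hanc hx hfA
      (right_ne_zero_of_mul hC)
    exact ⟨k, Subtype.ext hk⟩

end MartingaleDifferences

end

theorem martingale_transform_parent_bound_general
    {X : Type*} [m : MeasurableSpace X] (μ : Measure X)
    (𝓑n : ℤ → Set (Set X)) (𝓑 : Set (Set X)) (h𝓑 : 𝓑 = ⋃ n, 𝓑n n)
    (hpartdisj : ∀ n, (𝓑n n).Pairwise Disjoint)
    (hrefine : ∀ n, ∀ A ∈ 𝓑n n, A = ⋃₀ {B ∈ 𝓑n (n + 1) | B ⊆ A})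
    (hfin : ∀ A ∈ 𝓑, 0 < μ A ∧ μ A < ⊤)
    (pr : Set X → Set X)
    (hpr : ∀ A ∈ 𝓑, pr A ∈ 𝓑 ∧ A ⊆ pr A ∧ A ≠ pr A ∧
      ∀ C ∈ 𝓑, A ⊆ C → A ≠ C → pr A ⊆ C)
    (ε : Set X → ℝ) (hε : ∀ A, ε A = 1 ∨ ε A = -1)
    (Δ : Set X → (X → ℝ) → X → ℝ)
    (hΔ : ∀ (A : Set X) (f : X → ℝ) (x : X),
      Δ A f x = ∑' B : {B : Set X // B ∈ 𝓑 ∧ pr B = A},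
        (B : Set X).indicator
          (fun _ => (∫ y in (B : Set X), f y ∂μ) / (μ (B : Set X)).toReal -
            (∫ y in A, f y ∂μ) / (μ A).toReal) x)
    (T : (X → ℝ) → X → ℝ)
    (hT : ∀ (f : X → ℝ) (x : X), T f x = ∑' A : 𝓑, ε A * Δ A f x)
    (A : Set X) (hA : A ∈ 𝓑) (x : X) (hx : x ∈ A)
    (f : X → ℝ)
    (hsupp : ∀ y, y ∉ pr A \ A → f y = 0) :
    |T f x| ≤ 2 * (∫ y in pr A, |f y| ∂μ) / (μ (pr A)).toReal := by
  subst h𝓑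
  obtain rfl : Δ = martingaleDiff μ (⋃ n, 𝓑n n) pr := by funext C g y; exact hΔ C g y
  have hpr' : IsParentMap (⋃ n, 𝓑n n) pr :=
    ⟨fun B hB => (hpr B hB).1, fun B hB => (hpr B hB).2.1.ssubset_of_ne (hpr B hB).2.2.1,
      fun B hB C hC h => (hpr B hB).2.2.2 C hC h.subset h.ne⟩
  have hnest := subset_or_subset_of_mem_of_mem hpartdisj hrefine
  have hanc : ∀ B ∈ ⋃ n, 𝓑n n, A ⊆ B → ∃ k, pr^[k] A = B := fun B hB =>
    hpr'.exists_iterate_eq hpartdisj hrefine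
      (fun C hC => nonempty_of_measure_ne_zero (hfin C hC).1.ne') hA hB
  have hfA : ∀ y ∈ A, f y = 0 := fun y hy => hsupp y fun h => h.2 hy
  rw [hT, tsum_mul_martingaleDiff_eq_tsum_iterate hpr' hnest hA hanc hx hfA, div_eq_mul_inv]
  have hmono := (hpr'.strictMono_iterate hA).monotone
  have hu : Antitone fun k => (μ (pr^[k + 1] A)).toReal⁻¹ :=
    antitone_toReal_measure_inv (fun k l h => hmono (Nat.succ_le_succ h))
      (fun _ => (hfin _ (hpr'.iterate_mem hA _)).1) (fun _ => (hfin _ (hpr'.iterate_mem hA _)).2)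
  have ha : ∀ k, avg μ f (pr^[k + 1] A) =
      (∫ y in pr A, f y ∂μ) * (μ (pr^[k + 1] A)).toReal⁻¹ := fun k =>
    avg_eq_of_subset (fun y hy => hsupp y fun h => hy h.1) (hmono (Nat.succ_le_succ k.zero_le))
  have hε' : ∀ C, |ε C| ≤ 1 := fun C => by rcases hε C with h | h <;> simp [h]
  calc _ ≤ 2 * |∫ y in pr A, f y ∂μ| * (μ (pr A)).toReal⁻¹ :=
        abs_tsum_mul_sub_le (fun _ => hε' _) hu (fun _ => by positivity) (avg_eq_zero hfA) ha
    _ ≤ _ := by gcongr; exact abs_integral_le_integral_abs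

/-- Lemma 8.2: for the martingale transform T associated with a
martingale filtration, a point x ∈ A and an integrable function f supported in
pr(A) \ A, one has |Tf(x)| ≤ 2⟨|f|⟩_{pr(A)}. -/
theorem martingale_transform_parent_bound
    {X : Type*} [m : MeasurableSpace X] (μ : Measure X)
    (𝓑n : ℤ → Set (Set X)) (𝓑 : Set (Set X)) (h𝓑 : 𝓑 = ⋃ n, 𝓑n n)
    (hcnt : ∀ n, (𝓑n n).Countable)
    (hpartcov : ∀ n, ⋃₀ 𝓑n n = Set.univ)
    (hpartdisj : ∀ n, (𝓑n n).Pairwise Disjoint)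
    (hrefine : ∀ n, ∀ A ∈ 𝓑n n, A = ⋃₀ {B ∈ 𝓑n (n + 1) | B ⊆ A})
    (hgen : m = MeasurableSpace.generateFrom 𝓑)
    (hmeas : ∀ A ∈ 𝓑, MeasurableSet A)
    (hfin : ∀ A ∈ 𝓑, 0 < μ A ∧ μ A < ⊤)
    (htwo : ∀ x y : X, ∃ A ∈ 𝓑, x ∈ A ∧ y ∈ A)
    (pr : Set X → Set X)
    (hpr : ∀ A ∈ 𝓑, pr A ∈ 𝓑 ∧ A ⊆ pr A ∧ A ≠ pr A ∧
      ∀ C ∈ 𝓑, A ⊆ C → A ≠ C → pr A ⊆ C)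
    (ε : Set X → ℝ) (hε : ∀ A, ε A = 1 ∨ ε A = -1)
    (Δ : Set X → (X → ℝ) → X → ℝ)
    (hΔ : ∀ (A : Set X) (f : X → ℝ) (x : X),
      Δ A f x = ∑' B : {B : Set X // B ∈ 𝓑 ∧ pr B = A},
        (B : Set X).indicator
          (fun _ => (∫ y in (B : Set X), f y ∂μ) / (μ (B : Set X)).toReal -
            (∫ y in A, f y ∂μ) / (μ A).toReal) x)
    (T : (X → ℝ) → X → ℝ)
    (hT : ∀ (f : X → ℝ) (x : X), T f x = ∑' A : 𝓑, ε A * Δ A f x)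
    (A : Set X) (hA : A ∈ 𝓑) (x : X) (hx : x ∈ A)
    (f : X → ℝ) (hf : Integrable f μ)
    (hsupp : ∀ y, y ∉ pr A \ A → f y = 0) :
    |T f x| ≤ 2 * (∫ y in pr A, |f y| ∂μ) / (μ (pr A)).toReal :=
  martingale_transform_parent_bound_general (m := m) μ 𝓑n 𝓑 h𝓑 hpartdisj hrefine hfin pr hpr ε hε Δ
    hΔ T hT A hA x hx f hsupp
end
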